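/- arXiv:1211.5478 — 8 statements merged into one kernel-verified Lean document; each statement's English description precedes it below -/
import Mathlib

section
/- For every θ ∈ ℝ, if a differentiable curve t ↦ (ω(t), α(t), β(t)) ∈ ℝ³ × ℝ³ × ℝ³ satisfies the Kowalevski two-field equations, then the transformed curve ω' = Θ̃ω, α' = cos θ · (Θ̃α) − sin θ · (Θ̃β), β' = sin θ · (Θ̃α) + cos θ · (Θ̃β) also satisfies the Kowalevski two-field equations. -/
noncomputable section

/-- A differentiable curve `t ↦ (ω(t), α(t), β(t))` (given by its nine components)
is a solution of the Kowalevski two-field equations: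
`2ω̇₁ = ω₂ω₃ + β₃`, `2ω̇₂ = −ω₁ω₃ − α₃`, `ω̇₃ = α₂ − β₁`, `α̇ = α × ω`, `β̇ = β × ω`. -/
def KowSol (ω1 ω2 ω3 a1 a2 a3 b1 b2 b3 : ℝ → ℝ) : Prop :=
  (∀ t, HasDerivAt ω1 ((ω2 t * ω3 t + b3 t) / 2) t) ∧
  (∀ t, HasDerivAt ω2 ((-(ω1 t * ω3 t) - a3 t) / 2) t) ∧
  (∀ t, HasDerivAt ω3 (a2 t - b1 t) t) ∧
  (∀ t, HasDerivAt a1 (a2 t * ω3 t - a3 t * ω2 t) t) ∧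
  (∀ t, HasDerivAt a2 (a3 t * ω1 t - a1 t * ω3 t) t) ∧
  (∀ t, HasDerivAt a3 (a1 t * ω2 t - a2 t * ω1 t) t) ∧
  (∀ t, HasDerivAt b1 (b2 t * ω3 t - b3 t * ω2 t) t) ∧
  (∀ t, HasDerivAt b2 (b3 t * ω1 t - b1 t * ω3 t) t) ∧
  (∀ t, HasDerivAt b3 (b1 t * ω2 t - b2 t * ω1 t) t)

open Real Matrix

/-!
In vector form the system reads `ω̇ = F(ω, α, β)`, `α̇ = α × ω`, `β̇ = β × ω`, and the transformation
is linear with constant coefficients, so it suffices that the right-hand side is equivariant.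
The rotation `Θ̃` preserves the cross product, and `α × ω`, `β × ω` are linear in `(α, β)`.
For the `ω`-equation, `F = I⁻¹ (Iω × ω + e₁ × α + e₂ × β)` with `I = diag(2, 2, 1)` commuting
with `Θ̃`, and the mixing of `(α, β)` by the angle `θ` is undone by
`Θ̃e₁ = cos θ • e₁ + sin θ • e₂`, `Θ̃e₂ = -sin θ • e₁ + cos θ • e₂`.
-/

def rotZ (θ : ℝ) (v : Fin 3 → ℝ) : Fin 3 → ℝ :=
  ![v 0 * cos θ - v 1 * sin θ, v 0 * sin θ + v 1 * cos θ, v 2]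

theorem rotZ_cross (θ : ℝ) (u v : Fin 3 → ℝ) : rotZ θ (u ⨯₃ v) = rotZ θ u ⨯₃ rotZ θ v := by
  simp only [rotZ, cross_apply, cons_val_zero, cons_val_one, cons_val, vecCons_inj, and_true]
  refine ⟨by ring, by ring, by linear_combination (u 1 * v 0 - u 0 * v 1) * sin_sq_add_cos_sq θ⟩

theorem HasDerivAt.rotZ {u : ℝ → Fin 3 → ℝ} {u' : Fin 3 → ℝ} {t : ℝ} (θ : ℝ)
    (hu : HasDerivAt u u' t) : HasDerivAt (fun t => rotZ θ (u t)) (rotZ θ u') t := by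
  rw [hasDerivAt_pi] at hu ⊢
  intro i
  fin_cases i
  · exact ((hu 0).mul_const _).sub ((hu 1).mul_const _)
  · exact ((hu 0).mul_const _).add ((hu 1).mul_const _)
  · exact hu 2

def kowalevskiOmegaDot (ω α β : Fin 3 → ℝ) : Fin 3 → ℝ :=
  ![(ω 1 * ω 2 + β 2) / 2, (-(ω 0 * ω 2) - α 2) / 2, α 1 - β 0]

theorem kowalevskiOmegaDot_rotZ (θ : ℝ) (ω α β : Fin 3 → ℝ) :
    kowalevskiOmegaDot (rotZ θ ω) (cos θ • rotZ θ α - sin θ • rotZ θ β)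
      (sin θ • rotZ θ α + cos θ • rotZ θ β) = rotZ θ (kowalevskiOmegaDot ω α β) := by
  simp only [kowalevskiOmegaDot, rotZ, cons_val_zero, cons_val_one, cons_val, smul_cons,
    smul_eq_mul, smul_empty, Pi.add_apply, Pi.sub_apply, vecCons_inj, and_true]
  refine ⟨by ring, by ring, by linear_combination (α 1 - β 0) * sin_sq_add_cos_sq θ⟩

def IsKowalevskiCurve (ω α β : ℝ → Fin 3 → ℝ) : Prop :=
  (∀ t, HasDerivAt ω (kowalevskiOmegaDot (ω t) (α t) (β t)) t) ∧
  (∀ t, HasDerivAt α (α t ⨯₃ ω t) t) ∧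
  (∀ t, HasDerivAt β (β t ⨯₃ ω t) t)

theorem isKowalevskiCurve_iff_kowSol (ω α β : ℝ → Fin 3 → ℝ) :
    IsKowalevskiCurve ω α β ↔ KowSol (ω · 0) (ω · 1) (ω · 2) (α · 0) (α · 1) (α · 2)
      (β · 0) (β · 1) (β · 2) := by
  simp [IsKowalevskiCurve, KowSol, hasDerivAt_pi, Fin.forall_fin_succ, forall_and,
    kowalevskiOmegaDot, cross_apply, and_assoc]

theorem IsKowalevskiCurve.rotZ {ω α β : ℝ → Fin 3 → ℝ} (θ : ℝ) (h : IsKowalevskiCurve ω α β) :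
    IsKowalevskiCurve (fun t => rotZ θ (ω t))
      (fun t => cos θ • rotZ θ (α t) - sin θ • rotZ θ (β t))
      (fun t => sin θ • rotZ θ (α t) + cos θ • rotZ θ (β t)) := by
  obtain ⟨hω, hα, hβ⟩ := h
  refine ⟨fun t => ?_, fun t => ?_, fun t => ?_⟩
  · rw [kowalevskiOmegaDot_rotZ]
    exact (hω t).rotZ θ
  · refine ((((hα t).rotZ θ).const_smul (cos θ)).sub
      (((hβ t).rotZ θ).const_smul (sin θ))).congr_deriv ?_
    simp only [rotZ_cross, map_sub, map_smul, LinearMap.sub_apply, LinearMap.smul_apply]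
  · refine ((((hα t).rotZ θ).const_smul (sin θ)).add
      (((hβ t).rotZ θ).const_smul (cos θ))).congr_deriv ?_
    simp only [rotZ_cross, map_add, map_smul, LinearMap.add_apply, LinearMap.smul_apply]

/-- For every `θ ∈ ℝ`, if `(ω, α, β)` solves the Kowalevski two-field equations, so does
the transformed curve `ω' = Θ̃ω`, `α' = cos θ · Θ̃α − sin θ · Θ̃β`,
`β' = sin θ · Θ̃α + cos θ · Θ̃β`, where `Θ̃` is the rotation about the third axis by `θ`. -/
theorem kowalevski_symmetry (θ : ℝ) (ω1 ω2 ω3 a1 a2 a3 b1 b2 b3 : ℝ → ℝ)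
    (h : KowSol ω1 ω2 ω3 a1 a2 a3 b1 b2 b3) :
    KowSol
      (fun t => ω1 t * Real.cos θ - ω2 t * Real.sin θ)
      (fun t => ω1 t * Real.sin θ + ω2 t * Real.cos θ)
      ω3
      (fun t => Real.cos θ * (a1 t * Real.cos θ - a2 t * Real.sin θ)
        - Real.sin θ * (b1 t * Real.cos θ - b2 t * Real.sin θ))
      (fun t => Real.cos θ * (a1 t * Real.sin θ + a2 t * Real.cos θ)
        - Real.sin θ * (b1 t * Real.sin θ + b2 t * Real.cos θ))
      (fun t => Real.cos θ * a3 t - Real.sin θ * b3 t)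
      (fun t => Real.sin θ * (a1 t * Real.cos θ - a2 t * Real.sin θ)
        + Real.cos θ * (b1 t * Real.cos θ - b2 t * Real.sin θ))
      (fun t => Real.sin θ * (a1 t * Real.sin θ + a2 t * Real.cos θ)
        + Real.cos θ * (b1 t * Real.sin θ + b2 t * Real.cos θ))
      (fun t => Real.sin θ * a3 t + Real.cos θ * b3 t) := by
  have hvec : IsKowalevskiCurve (fun t => ![ω1 t, ω2 t, ω3 t]) (fun t => ![a1 t, a2 t, a3 t])
      (fun t => ![b1 t, b2 t, b3 t]) := (isKowalevskiCurve_iff_kowSol _ _ _).2 h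
  -- the components of the rotated vector curves unfold definitionally to those of the goal
  exact (isKowalevskiCurve_iff_kowSol _ _ _).1 (hvec.rotZ θ)
end
end

section
/- Along any differentiable solution of the Kowalevski two-field equations, the complex-valued functions f = w₁² + x₁ and g = w₂² + x₂ satisfy df/dt = −i ω₃ f and dg/dt = i ω₃ g, where w₁ = ω₁ + iω₂, w₂ = ω₁ − iω₂, x₁ = (α₁ − β₂) + i(α₂ + β₁), x₂ = (α₁ − β₂) − i(α₂ + β₁). Consequently the set ℳ = {w₁² + x₁ = 0, w₂² + x₂ = 0} (the first critical subsystem) is invariant under the flow, and K = f·g is a first integral. -/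
noncomputable section

/-- `f = w₁² + x₁` with `w₁ = ω₁ + iω₂`, `x₁ = (α₁ − β₂) + i(α₂ + β₁)`. -/
def fK (ω1 ω2 a1 a2 b1 b2 : ℝ → ℝ) (t : ℝ) : ℂ :=
  ((ω1 t : ℂ) + Complex.I * (ω2 t : ℂ)) ^ 2
    + (((a1 t - b2 t : ℝ) : ℂ) + Complex.I * ((a2 t + b1 t : ℝ) : ℂ))

/-- `g = w₂² + x₂` with `w₂ = ω₁ − iω₂`, `x₂ = (α₁ − β₂) − i(α₂ + β₁)`. -/
def gK (ω1 ω2 a1 a2 b1 b2 : ℝ → ℝ) (t : ℝ) : ℂ :=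
  ((ω1 t : ℂ) - Complex.I * (ω2 t : ℂ)) ^ 2
    + (((a1 t - b2 t : ℝ) : ℂ) - Complex.I * ((a2 t + b1 t : ℝ) : ℂ))

/-!
With `w₁ = ω₁ + iω₂` the equations give `ẇ₁ = -(i/2) ω₃ w₁ + (β₃ - iα₃)/2`, and the
inhomogeneous term `w₁ (β₃ - iα₃)` of `(w₁²)˙` cancels exactly against the one in `ẋ₁`, leaving
`ḟ = -iω₃ f`. Since `g = f̄` and the coefficient `-iω₃` is purely imaginary, `f g = |f|²` is
constant, so `f` (and with it `g`) vanishes identically once it vanishes at one time.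
-/

open Complex ComplexConjugate

theorem hasDerivAt_ofReal_add_I_mul_ofReal {u v : ℝ → ℝ} {u' v' t : ℝ}
    (hu : HasDerivAt u u' t) (hv : HasDerivAt v v' t) :
    HasDerivAt (fun s => (u s : ℂ) + I * v s) (u' + I * v') t :=
  hu.ofReal_comp.add (hv.ofReal_comp.const_mul I)

/-- The derivative of `F * conj F = ‖F‖²` is `2 (Re c) ‖F‖²`. -/
theorem hasDerivAt_mul_conj_of_re_eq_zero {F : ℝ → ℂ} {c : ℂ} {t : ℝ}
    (hF : HasDerivAt F (c * F t) t) (hc : c.re = 0) :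
    HasDerivAt (fun s => F s * conj (F s)) 0 t := by
  refine (hF.mul hF.star).congr_deriv ?_
  have hc' : c + conj c = 0 := by simp [add_conj, hc]
  simp only [star_mul', Complex.star_def]
  linear_combination (F t * conj (F t)) * hc'

theorem eq_zero_of_hasDerivAt_mul_of_re_eq_zero {F c : ℝ → ℂ}
    (hF : ∀ t, HasDerivAt F (c t * F t) t) (hc : ∀ t, (c t).re = 0) {t₀ : ℝ} (h₀ : F t₀ = 0)
    (t : ℝ) : F t = 0 := by
  have hK := fun s => hasDerivAt_mul_conj_of_re_eq_zero (hF s) (hc s)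
  have hconst : F t * conj (F t) = F t₀ * conj (F t₀) :=
    is_const_of_deriv_eq_zero (fun s => (hK s).differentiableAt) (fun s => (hK s).deriv) t t₀
  rw [h₀, zero_mul, mul_conj, ofReal_eq_zero, normSq_eq_zero] at hconst
  exact hconst

theorem gK_eq_conj_fK (ω1 ω2 a1 a2 b1 b2 : ℝ → ℝ) (t : ℝ) :
    gK ω1 ω2 a1 a2 b1 b2 t = conj (fK ω1 ω2 a1 a2 b1 b2 t) := by
  simp only [fK, gK, map_add, map_mul, map_pow, conj_ofReal, conj_I]
  ring

namespace KowSol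

variable {ω1 ω2 ω3 a1 a2 a3 b1 b2 b3 : ℝ → ℝ}

theorem hasDerivAt_fK (h : KowSol ω1 ω2 ω3 a1 a2 a3 b1 b2 b3) (t : ℝ) :
    HasDerivAt (fK ω1 ω2 a1 a2 b1 b2) (-I * ω3 t * fK ω1 ω2 a1 a2 b1 b2 t) t := by
  obtain ⟨hω1, hω2, -, ha1, ha2, -, hb1, hb2, -⟩ := h
  have hw := hasDerivAt_ofReal_add_I_mul_ofReal (hω1 t) (hω2 t)
  have hx := hasDerivAt_ofReal_add_I_mul_ofReal ((ha1 t).sub (hb2 t)) ((ha2 t).add (hb1 t))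
  refine ((hw.pow 2).add hx).congr_deriv ?_
  simp only [fK]
  push_cast
  linear_combination (I * ω2 t ^ 2 * ω3 t + ω1 t * ω2 t * ω3 t - a3 t * ω2 t
    + a2 t * ω3 t + b1 t * ω3 t) * I_sq

theorem hasDerivAt_gK (h : KowSol ω1 ω2 ω3 a1 a2 a3 b1 b2 b3) (t : ℝ) :
    HasDerivAt (gK ω1 ω2 a1 a2 b1 b2) (I * ω3 t * gK ω1 ω2 a1 a2 b1 b2 t) t := by
  rw [funext (gK_eq_conj_fK ω1 ω2 a1 a2 b1 b2)]
  refine (h.hasDerivAt_fK t).star.congr_deriv ?_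
  simp

end KowSol

/-- Along any solution of the Kowalevski two-field equations, `f = w₁² + x₁` and
`g = w₂² + x₂` satisfy `f' = −iω₃ f`, `g' = iω₃ g`; consequently the first critical
subsystem `ℳ = {f = 0, g = 0}` is invariant under the flow and `K = f·g` is a first
integral. -/
theorem first_critical_subsystem_invariant (ω1 ω2 ω3 a1 a2 a3 b1 b2 b3 : ℝ → ℝ)
    (h : KowSol ω1 ω2 ω3 a1 a2 a3 b1 b2 b3) :
    (∀ t, HasDerivAt (fK ω1 ω2 a1 a2 b1 b2)
        (-Complex.I * (ω3 t : ℂ) * fK ω1 ω2 a1 a2 b1 b2 t) t) ∧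
    (∀ t, HasDerivAt (gK ω1 ω2 a1 a2 b1 b2)
        (Complex.I * (ω3 t : ℂ) * gK ω1 ω2 a1 a2 b1 b2 t) t) ∧
    (∀ t₀, fK ω1 ω2 a1 a2 b1 b2 t₀ = 0 → gK ω1 ω2 a1 a2 b1 b2 t₀ = 0 →
      ∀ t, fK ω1 ω2 a1 a2 b1 b2 t = 0 ∧ gK ω1 ω2 a1 a2 b1 b2 t = 0) ∧
    (∀ t, HasDerivAt (fun t => fK ω1 ω2 a1 a2 b1 b2 t * gK ω1 ω2 a1 a2 b1 b2 t) 0 t) := by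
  have hc : ∀ t, (-I * (ω3 t : ℂ)).re = 0 := by simp
  refine ⟨h.hasDerivAt_fK, h.hasDerivAt_gK, fun t₀ hf₀ _ t => ?_, fun t => ?_⟩
  · have hf : fK ω1 ω2 a1 a2 b1 b2 t = 0 :=
      eq_zero_of_hasDerivAt_mul_of_re_eq_zero h.hasDerivAt_fK hc hf₀ t
    exact ⟨hf, by rw [gK_eq_conj_fK, hf, map_zero]⟩
  · simp only [gK_eq_conj_fK]
    exact hasDerivAt_mul_conj_of_re_eq_zero (h.hasDerivAt_fK t) (hc t)
end
end

section
/- Let a > b > 0, p² = a² + b², r² = a² − b², and let complex numbers x₁, x₂, y₁, y₂, z₁, z₂, w₁, w₂ (with x₂ = conj x₁, y₂ = conj y₁, z₂ = conj z₁, w₂ = conj w₁) and real w₃, s ≠ 0, τ satisfy the constraints z₁² + x₁y₂ = r², z₂² + x₂y₁ = r², x₁x₂ + y₁y₂ + 2z₁z₂ = 2p², the linear relations (y₂ + 2s)w₁ + x₁w₂ + z₁w₃ = 0, x₂w₁ + (y₁ + 2s)w₂ + z₂w₃ = 0, x₂z₁w₁ + x₁z₂w₂ + (τ − x₁x₂)w₃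 = 0, and 2s·w₁w₂ − (x₁x₂ + z₁z₂) + τ = 0, with w₁w₂ ≠ 0. Then the values of the first integrals H = ½w₃² + w₁w₂ − ½(y₁ + y₂), K = (w₁² + x₁)(w₂² + x₂), and G = ¼(p² − x₁x₂)w₃² + ½(x₂z₁w₁ + x₁z₂w₂)w₃ + ¼(x₂w₁ + y₁w₂)(y₂w₁ + x₁w₂) − ¼p²(y₁ + y₂) + ¼r²(x₁ + x₂) are h = (p² − τ)/(2s) + s, k = (τ² − 2p²τ + r⁴)/(4s²) + τ, g = (p⁴ − r⁴)/(4s) + ½(p² − τ)s. -/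
/-!
The linear relations say that `w = (w₁, w₂, w₃)` is orthogonal to the rows
`(y₂ + 2s, x₁, z₁)` and `(x₂, y₁ + 2s, z₂)`; with the third relation and the quadratic one,
`w` is then fixed exactly: the cross product of the two rows is `2 s w₃ • w`.
The third component of this, with `x₁x₂ + y₁y₂ + 2z₁z₂ = 2p²`, gives `H`.
Substituting the first two components into a quartic identity that holds on the constraint
variety gives `w₃ (z₁w₂ + z₂w₁ + w₁w₂w₃)`. Once the linear relations have been used, this is
the only further quantity that `K` and `G` depend on.
-/

section Constraints

variable {R : Type*} [CommRing R]

structure KowalevskiConstraints (p r x₁ x₂ y₁ y₂ z₁ z₂ : R) : Prop where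
  geo1 : z₁ ^ 2 + x₁ * y₂ = r ^ 2
  geo2 : z₂ ^ 2 + x₂ * y₁ = r ^ 2
  geo3 : x₁ * x₂ + y₁ * y₂ + 2 * z₁ * z₂ = 2 * p ^ 2

structure OnThirdSubsystem (s τ x₁ x₂ y₁ y₂ z₁ z₂ w₁ w₂ w₃ : R) : Prop where
  lin1 : (y₂ + 2 * s) * w₁ + x₁ * w₂ + z₁ * w₃ = 0
  lin2 : x₂ * w₁ + (y₁ + 2 * s) * w₂ + z₂ * w₃ = 0
  lin3 : x₂ * z₁ * w₁ + x₁ * z₂ * w₂ + (τ - x₁ * x₂) * w₃ = 0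
  quad : 2 * s * (w₁ * w₂) - (x₁ * x₂ + z₁ * z₂) + τ = 0

end Constraints

section Integrals

variable {K : Type*} [Field K]

def integralH (y₁ y₂ w₁ w₂ w₃ : K) : K :=
  (1 / 2) * w₃ ^ 2 + w₁ * w₂ - (1 / 2) * (y₁ + y₂)

def integralK (x₁ x₂ w₁ w₂ : K) : K :=
  (w₁ ^ 2 + x₁) * (w₂ ^ 2 + x₂)

def integralG (p r x₁ x₂ y₁ y₂ z₁ z₂ w₁ w₂ w₃ : K) : K :=
  (1 / 4) * (p ^ 2 - x₁ * x₂) * w₃ ^ 2 + (1 / 2) * (x₂ * z₁ * w₁ + x₁ * z₂ * w₂) * w₃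
    + (1 / 4) * (x₂ * w₁ + y₁ * w₂) * (y₂ * w₁ + x₁ * w₂)
    - (1 / 4) * p ^ 2 * (y₁ + y₂) + (1 / 4) * r ^ 2 * (x₁ + x₂)

end Integrals

namespace OnThirdSubsystem

section Cross

variable {R : Type*} [CommRing R] [IsDomain R] {s τ x₁ x₂ y₁ y₂ z₁ z₂ w₁ w₂ w₃ : R}

theorem cross_fst (h : OnThirdSubsystem s τ x₁ x₂ y₁ y₂ z₁ z₂ w₁ w₂ w₃) (hw₂ : w₂ ≠ 0) :
    x₁ * z₂ - (y₁ + 2 * s) * z₁ = 2 * s * w₃ * w₁ :=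
  mul_left_cancel₀ hw₂ <| by linear_combination h.lin3 - z₁ * h.lin2 - w₃ * h.quad

theorem cross_snd (h : OnThirdSubsystem s τ x₁ x₂ y₁ y₂ z₁ z₂ w₁ w₂ w₃) (hw₁ : w₁ ≠ 0) :
    x₂ * z₁ - (y₂ + 2 * s) * z₂ = 2 * s * w₃ * w₂ :=
  mul_left_cancel₀ hw₁ <| by linear_combination h.lin3 - z₂ * h.lin1 - w₃ * h.quad

theorem cross_thd (h : OnThirdSubsystem s τ x₁ x₂ y₁ y₂ z₁ z₂ w₁ w₂ w₃) (hw : w₁ * w₂ ≠ 0) :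
    (y₁ + 2 * s) * (y₂ + 2 * s) - x₁ * x₂ = 2 * s * w₃ * w₃ :=
  mul_left_cancel₀ (left_ne_zero_of_mul hw) <| by
    linear_combination (y₁ + 2 * s) * h.lin1 - x₁ * h.lin2
      + w₃ * h.cross_fst (right_ne_zero_of_mul hw)

theorem w₃_term_eq {p r : R} (hc : KowalevskiConstraints p r x₁ x₂ y₁ y₂ z₁ z₂)
    (h : OnThirdSubsystem s τ x₁ x₂ y₁ y₂ z₁ z₂ w₁ w₂ w₃) (hw : w₁ * w₂ ≠ 0) :
    4 * s ^ 2 * (w₃ * (z₁ * w₂ + z₂ * w₁ + w₁ * w₂ * w₃))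
      = p ^ 4 - r ^ 4 - (x₁ * x₂ + z₁ * z₂ - p ^ 2) ^ 2 - 4 * s ^ 2 * (z₁ * z₂) := by
  have h₁ := h.cross_fst (right_ne_zero_of_mul hw)
  have h₂ := h.cross_snd (left_ne_zero_of_mul hw)
  linear_combination (x₁ * x₂ + z₁ * z₂) * hc.geo3 - r ^ 2 * hc.geo1
    - (z₁ ^ 2 + x₁ * y₂) * hc.geo2 - (2 * s * z₂ + (x₂ * z₁ - (y₂ + 2 * s) * z₂)) * h₁
    - (2 * s * z₁ + 2 * s * w₃ * w₁) * h₂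

end Cross

variable {K : Type*} [Field K] [CharZero K] {p r s τ x₁ x₂ y₁ y₂ z₁ z₂ w₁ w₂ w₃ : K}

theorem energy_relation (hc : KowalevskiConstraints p r x₁ x₂ y₁ y₂ z₁ z₂)
    (h : OnThirdSubsystem s τ x₁ x₂ y₁ y₂ z₁ z₂ w₁ w₂ w₃) (hw : w₁ * w₂ ≠ 0) :
    s * (w₃ ^ 2 + 2 * (w₁ * w₂) - (y₁ + y₂)) = p ^ 2 - τ + 2 * s ^ 2 := by
  linear_combination (1 / 2 : K) * hc.geo3 + h.quad - (1 / 2 : K) * h.cross_thd hw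

theorem integralH_eq (hc : KowalevskiConstraints p r x₁ x₂ y₁ y₂ z₁ z₂)
    (h : OnThirdSubsystem s τ x₁ x₂ y₁ y₂ z₁ z₂ w₁ w₂ w₃) (hs : s ≠ 0) (hw : w₁ * w₂ ≠ 0) :
    integralH y₁ y₂ w₁ w₂ w₃ = (p ^ 2 - τ) / (2 * s) + s := by
  unfold integralH
  field_simp
  linear_combination h.energy_relation hc hw

theorem integralK_eq (hc : KowalevskiConstraints p r x₁ x₂ y₁ y₂ z₁ z₂)
    (h : OnThirdSubsystem s τ x₁ x₂ y₁ y₂ z₁ z₂ w₁ w₂ w₃) (hs : s ≠ 0) (hw : w₁ * w₂ ≠ 0) :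
    integralK x₁ x₂ w₁ w₂ = (τ ^ 2 - 2 * p ^ 2 * τ + r ^ 4) / (4 * s ^ 2) + τ := by
  unfold integralK
  field_simp
  linear_combination 4 * s ^ 2 * (w₁ * h.lin2 + w₂ * h.lin1)
    + 4 * s * (w₁ * w₂) * h.energy_relation hc hw - h.w₃_term_eq hc hw
    + (2 * (p ^ 2 - τ - 2 * s ^ 2) - 2 * s * (w₁ * w₂) - (x₁ * x₂ + z₁ * z₂) + τ) * h.quad

theorem integralG_eq (hc : KowalevskiConstraints p r x₁ x₂ y₁ y₂ z₁ z₂)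
    (h : OnThirdSubsystem s τ x₁ x₂ y₁ y₂ z₁ z₂ w₁ w₂ w₃) (hs : s ≠ 0) (hw : w₁ * w₂ ≠ 0) :
    integralG p r x₁ x₂ y₁ y₂ z₁ z₂ w₁ w₂ w₃
      = (p ^ 4 - r ^ 4) / (4 * s) + (1 / 2) * (p ^ 2 - τ) * s := by
  have hr : r ^ 2 * (x₁ + x₂) = 2 * s * w₃ * (z₂ * w₁ + z₁ * w₂)
      + x₁ * x₂ * (y₁ + y₂) + (y₁ + y₂ + 4 * s) * (z₁ * z₂) := by
    linear_combination z₂ * h.cross_fst (right_ne_zero_of_mul hw)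
      + z₁ * h.cross_snd (left_ne_zero_of_mul hw) - x₁ * hc.geo2 - x₂ * hc.geo1
  unfold integralG
  field_simp
  linear_combination 2 * (2 * s * w₃ * h.lin3 + s * (x₂ * w₁ + y₁ * w₂) * h.lin1
    - s * (2 * s * w₁ + z₁ * w₃) * h.lin2 + s * hr + h.w₃_term_eq hc hw
    - (x₁ * x₂ + z₁ * z₂ - p ^ 2) * h.energy_relation hc hw
    + (x₁ * x₂ + z₁ * z₂ - p ^ 2 + 2 * s ^ 2 - 2 * s * w₃ ^ 2) * h.quad)

end OnThirdSubsystem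

theorem third_subsystem_integral_values_general
    (p r s τ : ℝ) (hs : s ≠ 0)
    (x₁ x₂ y₁ y₂ z₁ z₂ w₁ w₂ : ℂ) (w₃ : ℝ)
    (hgeo1 : z₁ ^ 2 + x₁ * y₂ = (r : ℂ) ^ 2)
    (hgeo2 : z₂ ^ 2 + x₂ * y₁ = (r : ℂ) ^ 2)
    (hgeo3 : x₁ * x₂ + y₁ * y₂ + 2 * z₁ * z₂ = 2 * (p : ℂ) ^ 2)
    (hlin1 : (y₂ + 2 * (s : ℂ)) * w₁ + x₁ * w₂ + z₁ * (w₃ : ℂ) = 0)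
    (hlin2 : x₂ * w₁ + (y₁ + 2 * (s : ℂ)) * w₂ + z₂ * (w₃ : ℂ) = 0)
    (hlin3 : x₂ * z₁ * w₁ + x₁ * z₂ * w₂ + ((τ : ℂ) - x₁ * x₂) * (w₃ : ℂ) = 0)
    (hquad : 2 * (s : ℂ) * (w₁ * w₂) - (x₁ * x₂ + z₁ * z₂) + (τ : ℂ) = 0)
    (hw0 : w₁ * w₂ ≠ 0) :
    (1 / 2) * (w₃ : ℂ) ^ 2 + w₁ * w₂ - (1 / 2) * (y₁ + y₂)
        = ((p ^ 2 - τ) / (2 * s) + s : ℝ) ∧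
    (w₁ ^ 2 + x₁) * (w₂ ^ 2 + x₂)
        = ((τ ^ 2 - 2 * p ^ 2 * τ + r ^ 4) / (4 * s ^ 2) + τ : ℝ) ∧
    (1 / 4) * ((p : ℂ) ^ 2 - x₁ * x₂) * (w₃ : ℂ) ^ 2
        + (1 / 2) * (x₂ * z₁ * w₁ + x₁ * z₂ * w₂) * (w₃ : ℂ)
        + (1 / 4) * (x₂ * w₁ + y₁ * w₂) * (y₂ * w₁ + x₁ * w₂)
        - (1 / 4) * (p : ℂ) ^ 2 * (y₁ + y₂)
        + (1 / 4) * (r : ℂ) ^ 2 * (x₁ + x₂)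
        = ((p ^ 4 - r ^ 4) / (4 * s) + (1 / 2) * (p ^ 2 - τ) * s : ℝ) := by
  have hc : KowalevskiConstraints (p : ℂ) r x₁ x₂ y₁ y₂ z₁ z₂ := ⟨hgeo1, hgeo2, hgeo3⟩
  have h : OnThirdSubsystem (s : ℂ) τ x₁ x₂ y₁ y₂ z₁ z₂ w₁ w₂ w₃ := ⟨hlin1, hlin2, hlin3, hquad⟩
  have hs' : (s : ℂ) ≠ 0 := Complex.ofReal_ne_zero.mpr hs
  push_cast
  exact ⟨h.integralH_eq hc hs' hw0, h.integralK_eq hc hs' hw0, h.integralG_eq hc hs' hw0⟩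

/-- On the third critical subsystem (described by the listed linear relations and
`2s·w₁w₂ − (x₁x₂ + z₁z₂) + τ = 0`), the first integrals `H`, `K`, `G` take the values
`h = (p² − τ)/(2s) + s`, `k = (τ² − 2p²τ + r⁴)/(4s²) + τ`,
`g = (p⁴ − r⁴)/(4s) + ½(p² − τ)s`. -/
theorem third_subsystem_integral_values
    (a b p r s τ : ℝ) (hb : 0 < b) (hab : b < a)
    (hp : p ^ 2 = a ^ 2 + b ^ 2) (hr : r ^ 2 = a ^ 2 - b ^ 2) (hs : s ≠ 0)
    (x₁ x₂ y₁ y₂ z₁ z₂ w₁ w₂ : ℂ) (w₃ : ℝ)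
    (hx : x₂ = starRingEnd ℂ x₁) (hy : y₂ = starRingEnd ℂ y₁)
    (hz : z₂ = starRingEnd ℂ z₁) (hw : w₂ = starRingEnd ℂ w₁)
    (hgeo1 : z₁ ^ 2 + x₁ * y₂ = (r : ℂ) ^ 2)
    (hgeo2 : z₂ ^ 2 + x₂ * y₁ = (r : ℂ) ^ 2)
    (hgeo3 : x₁ * x₂ + y₁ * y₂ + 2 * z₁ * z₂ = 2 * (p : ℂ) ^ 2)
    (hlin1 : (y₂ + 2 * (s : ℂ)) * w₁ + x₁ * w₂ + z₁ * (w₃ : ℂ) = 0)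
    (hlin2 : x₂ * w₁ + (y₁ + 2 * (s : ℂ)) * w₂ + z₂ * (w₃ : ℂ) = 0)
    (hlin3 : x₂ * z₁ * w₁ + x₁ * z₂ * w₂ + ((τ : ℂ) - x₁ * x₂) * (w₃ : ℂ) = 0)
    (hquad : 2 * (s : ℂ) * (w₁ * w₂) - (x₁ * x₂ + z₁ * z₂) + (τ : ℂ) = 0)
    (hw0 : w₁ * w₂ ≠ 0) :
    (1 / 2) * (w₃ : ℂ) ^ 2 + w₁ * w₂ - (1 / 2) * (y₁ + y₂)
        = ((p ^ 2 - τ) / (2 * s) + s : ℝ) ∧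
    (w₁ ^ 2 + x₁) * (w₂ ^ 2 + x₂)
        = ((τ ^ 2 - 2 * p ^ 2 * τ + r ^ 4) / (4 * s ^ 2) + τ : ℝ) ∧
    (1 / 4) * ((p : ℂ) ^ 2 - x₁ * x₂) * (w₃ : ℂ) ^ 2
        + (1 / 2) * (x₂ * z₁ * w₁ + x₁ * z₂ * w₂) * (w₃ : ℂ)
        + (1 / 4) * (x₂ * w₁ + y₁ * w₂) * (y₂ * w₁ + x₁ * w₂)
        - (1 / 4) * (p : ℂ) ^ 2 * (y₁ + y₂)
        + (1 / 4) * (r : ℂ) ^ 2 * (x₁ + x₂)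
        = ((p ^ 4 - r ^ 4) / (4 * s) + (1 / 2) * (p ^ 2 - τ) * s : ℝ) :=
  third_subsystem_integral_values_general p r s τ hs x₁ x₂ y₁ y₂ z₁ z₂ w₁ w₂ w₃ hgeo1 hgeo2 hgeo3
    hlin1 hlin2 hlin3 hquad hw0
end

section
/- Let p, r ∈ ℝ and let complex numbers x₁, x₂, y₁, y₂, z₁, z₂ satisfy z₁² + x₁y₂ = r², z₂² + x₂y₁ = r², and x₁x₂ + y₁y₂ + 2z₁z₂ = 2p². Then: (i) r²(x₁y₂ + x₂y₁) = r⁴ + 2p²·x₁x₂ − (x₁x₂ + z₁z₂)²; (ii) r²(z₁ + z₂)² = (x₁x₂ + z₁z₂ + r²)² − 2(p² + r²)·x₁x₂; (iii) r²(z₁ − z₂)² = (x₁x₂ + z₁z₂ − r²)² − 2(p² − r²)·x₁x₂. -/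
/-!
Multiplying the first two constraints gives `(r² - z₁²)(r² - z₂²) = (x₁y₂)(x₂y₁) = (x₁x₂)(y₁y₂)`,
and the third constraint eliminates `y₁y₂`. The result expresses `r²(z₁² + z₂²)` through
`x₁x₂` and `z₁z₂` alone; the three identities are rearrangements of it.
-/

namespace Kowalevski

variable {R : Type*} [CommRing R] {p r x₁ x₂ y₁ y₂ z₁ z₂ : R}

theorem sq_sub_mul_sq_sub_eq (h1 : z₁ ^ 2 + x₁ * y₂ = r ^ 2) (h2 : z₂ ^ 2 + x₂ * y₁ = r ^ 2)
    (h3 : x₁ * x₂ + y₁ * y₂ + 2 * z₁ * z₂ = 2 * p ^ 2) :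
    (r ^ 2 - z₁ ^ 2) * (r ^ 2 - z₂ ^ 2) = x₁ * x₂ * (2 * p ^ 2 - x₁ * x₂ - 2 * (z₁ * z₂)) := by
  linear_combination x₁ * x₂ * h3 - x₁ * y₂ * h2 - (r ^ 2 - z₂ ^ 2) * h1

theorem sq_mul_sq_add_sq_eq (h1 : z₁ ^ 2 + x₁ * y₂ = r ^ 2) (h2 : z₂ ^ 2 + x₂ * y₁ = r ^ 2)
    (h3 : x₁ * x₂ + y₁ * y₂ + 2 * z₁ * z₂ = 2 * p ^ 2) :
    r ^ 2 * (z₁ ^ 2 + z₂ ^ 2) = r ^ 4 + (x₁ * x₂ + z₁ * z₂) ^ 2 - 2 * p ^ 2 * (x₁ * x₂) := by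
  linear_combination -sq_sub_mul_sq_sub_eq h1 h2 h3

end Kowalevski

/-- From the geometric constraints in the Kowalevski complex variables
(`z₁² + x₁y₂ = r²`, `z₂² + x₂y₁ = r²`, `x₁x₂ + y₁y₂ + 2z₁z₂ = 2p²`) one gets
(i) `r²(x₁y₂ + x₂y₁) = r⁴ + 2p²x₁x₂ − (x₁x₂ + z₁z₂)²`;
(ii) `r²(z₁ + z₂)² = (x₁x₂ + z₁z₂ + r²)² − 2(p² + r²)x₁x₂`;
(iii) `r²(z₁ − z₂)² = (x₁x₂ + z₁z₂ − r²)² − 2(p² − r²)x₁x₂`. -/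
theorem geometric_constraint_identities
    (p r : ℝ) (x₁ x₂ y₁ y₂ z₁ z₂ : ℂ)
    (h1 : z₁ ^ 2 + x₁ * y₂ = (r : ℂ) ^ 2)
    (h2 : z₂ ^ 2 + x₂ * y₁ = (r : ℂ) ^ 2)
    (h3 : x₁ * x₂ + y₁ * y₂ + 2 * z₁ * z₂ = 2 * (p : ℂ) ^ 2) :
    (r : ℂ) ^ 2 * (x₁ * y₂ + x₂ * y₁)
        = (r : ℂ) ^ 4 + 2 * (p : ℂ) ^ 2 * (x₁ * x₂) - (x₁ * x₂ + z₁ * z₂) ^ 2 ∧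
    (r : ℂ) ^ 2 * (z₁ + z₂) ^ 2
        = (x₁ * x₂ + z₁ * z₂ + (r : ℂ) ^ 2) ^ 2
          - 2 * ((p : ℂ) ^ 2 + (r : ℂ) ^ 2) * (x₁ * x₂) ∧
    (r : ℂ) ^ 2 * (z₁ - z₂) ^ 2
        = (x₁ * x₂ + z₁ * z₂ - (r : ℂ) ^ 2) ^ 2
          - 2 * ((p : ℂ) ^ 2 - (r : ℂ) ^ 2) * (x₁ * x₂) := by
  have key := Kowalevski.sq_mul_sq_add_sq_eq h1 h2 h3
  refine ⟨?_, ?_, ?_⟩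
  · linear_combination (r : ℂ) ^ 2 * (h1 + h2) - key
  · linear_combination key
  · linear_combination key
end

section
/- Let s, τ, p, r, χ, σ ∈ ℝ satisfy σ = τ² − 2p²τ + r⁴ and 4s²χ² = σ + 4s²τ. Then for all real x, ξ the polynomial identity P² − Φ₁Φ₂Ψ₁Ψ₂ = 4x²(τξ² + σx² − τσ)Q² holds, where Φ₁ = (ξ + τ + r²)² − 2(p² + r²)x², Φ₂ = (ξ + τ − r²)² − 2(p² − r²)x², Ψ₁ = ξ² − 4s²(x + χ)², Ψ₂ = ξ² − 4s²(x − χ)², Q = (ξ + τ + 2s² − p²)² − 4s²x² − (p² − 2s²)² + r⁴, and P = 4s²(x² − χ²)[2(τ − p²)x² − τ² + r⁴] + 8s²[(τ − 2χ²)x² + τχ²]ξ − 2[(τ − p² − 2s²)x² + τ(p² − 2s²) − r⁴]ξ² − 2τξ³ − ξ⁴. -/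
/-!
The constants `s` and `χ` enter the identity only through `k = 2s²` and `c = 4s²χ²`
(`Ψ₁Ψ₂ = (ξ² − 2kx² − c)² − 8kcx²`). In these variables the constraint `4s²χ² = σ + 4s²τ`
reads `c = σ + 2kτ`, which can be substituted, turning the claim into an identity in the free
polynomial ring over `k, τ, p, r, x, ξ`.
-/

noncomputable section

namespace KowalevskiSeparation

variable (k c σ τ p r x ξ : ℝ)

def phi₁ : ℝ := (ξ + τ + r ^ 2) ^ 2 - 2 * (p ^ 2 + r ^ 2) * x ^ 2

def phi₂ : ℝ := (ξ + τ - r ^ 2) ^ 2 - 2 * (p ^ 2 - r ^ 2) * x ^ 2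

def psiProd : ℝ := (ξ ^ 2 - 2 * k * x ^ 2 - c) ^ 2 - 8 * k * c * x ^ 2

def polyP : ℝ :=
  (2 * k * x ^ 2 - c) * (2 * (τ - p ^ 2) * x ^ 2 - τ ^ 2 + r ^ 4)
    + 2 * ((2 * k * τ - 2 * c) * x ^ 2 + c * τ) * ξ
    - 2 * ((τ - p ^ 2 - k) * x ^ 2 + τ * (p ^ 2 - k) - r ^ 4) * ξ ^ 2
    - 2 * τ * ξ ^ 3 - ξ ^ 4

def polyQ : ℝ := (ξ + τ + k - p ^ 2) ^ 2 - 2 * k * x ^ 2 - (p ^ 2 - k) ^ 2 + r ^ 4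

def muSq : ℝ := τ * ξ ^ 2 + σ * x ^ 2 - τ * σ

theorem polyP_sq_sub_phi_mul_psi (hσ : σ = τ ^ 2 - 2 * p ^ 2 * τ + r ^ 4)
    (hc : c = σ + 2 * k * τ) :
    polyP k c τ p r x ξ ^ 2 - phi₁ τ p r x ξ * phi₂ τ p r x ξ * psiProd k c x ξ
      = 4 * x ^ 2 * muSq σ τ x ξ * polyQ k τ p r x ξ ^ 2 := by
  subst hc hσ
  unfold polyP phi₁ phi₂ psiProd muSq polyQ
  ring

variable (s χ : ℝ)

theorem psiProd_two_mul_sq :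
    psiProd (2 * s ^ 2) (4 * s ^ 2 * χ ^ 2) x ξ
      = (ξ ^ 2 - 4 * s ^ 2 * (x + χ) ^ 2) * (ξ ^ 2 - 4 * s ^ 2 * (x - χ) ^ 2) := by
  unfold psiProd
  ring

theorem polyP_two_mul_sq :
    polyP (2 * s ^ 2) (4 * s ^ 2 * χ ^ 2) τ p r x ξ
      = 4 * s ^ 2 * (x ^ 2 - χ ^ 2) * (2 * (τ - p ^ 2) * x ^ 2 - τ ^ 2 + r ^ 4)
        + 8 * s ^ 2 * ((τ - 2 * χ ^ 2) * x ^ 2 + τ * χ ^ 2) * ξ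
        - 2 * ((τ - p ^ 2 - 2 * s ^ 2) * x ^ 2 + τ * (p ^ 2 - 2 * s ^ 2) - r ^ 4) * ξ ^ 2
        - 2 * τ * ξ ^ 3 - ξ ^ 4 := by
  unfold polyP
  ring

theorem polyQ_two_mul_sq :
    polyQ (2 * s ^ 2) τ p r x ξ
      = (ξ + τ + 2 * s ^ 2 - p ^ 2) ^ 2 - 4 * s ^ 2 * x ^ 2 - (p ^ 2 - 2 * s ^ 2) ^ 2 + r ^ 4 := by
  unfold polyQ
  ring

end KowalevskiSeparation

end

open KowalevskiSeparation in
/-- The key polynomial identity `P² − Φ₁Φ₂Ψ₁Ψ₂ = 4x²(τξ² + σx² − τσ)Q²` used in the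
separation of variables for the third critical subsystem. -/
theorem key_polynomial_identity
    (s τ p r χ σ : ℝ)
    (hσ : σ = τ ^ 2 - 2 * p ^ 2 * τ + r ^ 4)
    (hχ : 4 * s ^ 2 * χ ^ 2 = σ + 4 * s ^ 2 * τ) :
    ∀ x ξ : ℝ,
      (4 * s ^ 2 * (x ^ 2 - χ ^ 2) * (2 * (τ - p ^ 2) * x ^ 2 - τ ^ 2 + r ^ 4)
        + 8 * s ^ 2 * ((τ - 2 * χ ^ 2) * x ^ 2 + τ * χ ^ 2) * ξ
        - 2 * ((τ - p ^ 2 - 2 * s ^ 2) * x ^ 2 + τ * (p ^ 2 - 2 * s ^ 2) - r ^ 4) * ξ ^ 2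
        - 2 * τ * ξ ^ 3 - ξ ^ 4) ^ 2
      - ((ξ + τ + r ^ 2) ^ 2 - 2 * (p ^ 2 + r ^ 2) * x ^ 2)
        * ((ξ + τ - r ^ 2) ^ 2 - 2 * (p ^ 2 - r ^ 2) * x ^ 2)
        * (ξ ^ 2 - 4 * s ^ 2 * (x + χ) ^ 2)
        * (ξ ^ 2 - 4 * s ^ 2 * (x - χ) ^ 2)
      = 4 * x ^ 2 * (τ * ξ ^ 2 + σ * x ^ 2 - τ * σ)
        * ((ξ + τ + 2 * s ^ 2 - p ^ 2) ^ 2 - 4 * s ^ 2 * x ^ 2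
            - (p ^ 2 - 2 * s ^ 2) ^ 2 + r ^ 4) ^ 2 := by
  intro x ξ
  have hc : 4 * s ^ 2 * χ ^ 2 = σ + 2 * (2 * s ^ 2) * τ := by rw [hχ]; ring
  have key := polyP_sq_sub_phi_mul_psi (2 * s ^ 2) (4 * s ^ 2 * χ ^ 2) σ τ p r x ξ hσ hc
  rw [polyP_two_mul_sq, psiProd_two_mul_sq, polyQ_two_mul_sq] at key
  unfold phi₁ phi₂ muSq at key
  linear_combination key
end

section
/- Let σ, τ, t₁, t₂ ∈ ℝ with τ > 0, t₁ + t₂ ≠ 0, and let U₁, U₂ satisfy U₁² = t₁² − σ, U₂² = t₂² − σ. Define x = √τ(U₁ + U₂)/(t₁ + t₂), ξ = (t₁t₂ + σ − U₁U₂)/(t₁ + t₂), μ = √τ(t₂U₁ − t₁U₂)/(t₁ + t₂). Then: (i) μ² = τξ² + σx² − τσ; and (ii) xμ = τξ(t₁ − t₂)/(t₁ + t₂). -/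
/-!
Clearing the common denominator `t₁ + t₂` and replacing `√τ ²` by `τ`, both claims become
polynomial identities in `σ, t₁, t₂, U₁, U₂` modulo `U₁² = t₁² - σ`, `U₂² = t₂² - σ`.
For (i) the difference of the two sides even factors as `(U₁² - (t₁² - σ)) (t₂² - σ - U₂²)`;
for (ii) it is `t₂ (U₁² - (t₁² - σ)) - t₁ (U₂² - (t₂² - σ))`.
-/

section Numerators

variable {R : Type*} [CommRing R] {σ t₁ t₂ U₁ U₂ : R}

theorem tangentNet_mu_sq_numerator_sub (σ t₁ t₂ U₁ U₂ : R) :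
    (t₂ * U₁ - t₁ * U₂) ^ 2
        - ((t₁ * t₂ + σ - U₁ * U₂) ^ 2 + σ * (U₁ + U₂) ^ 2 - σ * (t₁ + t₂) ^ 2) =
      (U₁ ^ 2 - (t₁ ^ 2 - σ)) * (t₂ ^ 2 - σ - U₂ ^ 2) := by
  ring

theorem tangentNet_mu_sq_numerator (hU₁ : U₁ ^ 2 = t₁ ^ 2 - σ) :
    (t₂ * U₁ - t₁ * U₂) ^ 2 =
      (t₁ * t₂ + σ - U₁ * U₂) ^ 2 + σ * (U₁ + U₂) ^ 2 - σ * (t₁ + t₂) ^ 2 := by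
  rw [← sub_eq_zero, tangentNet_mu_sq_numerator_sub, hU₁, sub_self, zero_mul]

theorem tangentNet_x_mul_mu_numerator (hU₁ : U₁ ^ 2 = t₁ ^ 2 - σ) (hU₂ : U₂ ^ 2 = t₂ ^ 2 - σ) :
    (U₁ + U₂) * (t₂ * U₁ - t₁ * U₂) = (t₁ * t₂ + σ - U₁ * U₂) * (t₁ - t₂) := by
  linear_combination t₂ * hU₁ - t₁ * hU₂

end Numerators

section Field

variable {K : Type*} [Field K] {σ τ s t₁ t₂ U₁ U₂ : K}

theorem tangentNet_mu_sq (hs : s ^ 2 = τ) (ht : t₁ + t₂ ≠ 0) (hU₁ : U₁ ^ 2 = t₁ ^ 2 - σ) :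
    (s * (t₂ * U₁ - t₁ * U₂) / (t₁ + t₂)) ^ 2 =
      τ * ((t₁ * t₂ + σ - U₁ * U₂) / (t₁ + t₂)) ^ 2
        + σ * (s * (U₁ + U₂) / (t₁ + t₂)) ^ 2 - τ * σ := by
  field_simp
  linear_combination
    ((t₂ * U₁ - t₁ * U₂) ^ 2 - σ * (U₁ + U₂) ^ 2) * hs
      + τ * tangentNet_mu_sq_numerator (t₂ := t₂) (U₂ := U₂) hU₁

theorem tangentNet_x_mul_mu (hs : s ^ 2 = τ) (ht : t₁ + t₂ ≠ 0)
    (hU₁ : U₁ ^ 2 = t₁ ^ 2 - σ) (hU₂ : U₂ ^ 2 = t₂ ^ 2 - σ) :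
    s * (U₁ + U₂) / (t₁ + t₂) * (s * (t₂ * U₁ - t₁ * U₂) / (t₁ + t₂)) =
      τ * ((t₁ * t₂ + σ - U₁ * U₂) / (t₁ + t₂)) * (t₁ - t₂) / (t₁ + t₂) := by
  field_simp
  linear_combination
    (U₁ + U₂) * (t₂ * U₁ - t₁ * U₂) * hs + τ * tangentNet_x_mul_mu_numerator hU₁ hU₂

end Field

/-- Inversion of the tangent-net coordinates: with `x = √τ(U₁ + U₂)/(t₁ + t₂)`,
`ξ = (t₁t₂ + σ − U₁U₂)/(t₁ + t₂)`, `μ = √τ(t₂U₁ − t₁U₂)/(t₁ + t₂)`, one has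
(i) `μ² = τξ² + σx² − τσ` and (ii) `xμ = τξ(t₁ − t₂)/(t₁ + t₂)`. -/
theorem tangent_net_inversion
    (σ τ t₁ t₂ : ℝ) (hτ : 0 < τ) (ht : t₁ + t₂ ≠ 0)
    (U₁ U₂ : ℝ) (hU₁ : U₁ ^ 2 = t₁ ^ 2 - σ) (hU₂ : U₂ ^ 2 = t₂ ^ 2 - σ)
    (x ξ μ : ℝ)
    (hx : x = Real.sqrt τ * (U₁ + U₂) / (t₁ + t₂))
    (hξ : ξ = (t₁ * t₂ + σ - U₁ * U₂) / (t₁ + t₂))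
    (hμ : μ = Real.sqrt τ * (t₂ * U₁ - t₁ * U₂) / (t₁ + t₂)) :
    μ ^ 2 = τ * ξ ^ 2 + σ * x ^ 2 - τ * σ ∧
    x * μ = τ * ξ * (t₁ - t₂) / (t₁ + t₂) := by
  have hs : Real.sqrt τ ^ 2 = τ := Real.sq_sqrt hτ.le
  subst hx hξ hμ
  exact ⟨tangentNet_mu_sq hs ht hU₁, tangentNet_x_mul_mu hs ht hU₁ hU₂⟩
end

section
/- Let m ≠ 0, ℓ, r ≠ 0, s₁ ≠ s₂ be real numbers, and let x, z, R₁, R₂ be real (or complex) numbers satisfying x = r²/(s₁ − s₂), x² + z² = r²(s₁ + s₂)/(s₁ − s₂), R₁R₂ = ℓx − m(x² + z²), and R₁² + R₂² = (1/(r²m))[(ℓx − m(x² + z²))² − x²] + r²m. Then (R₁ + R₂)² = r²Φ(s₂)/(s₁ − s₂)² and (R₁ − R₂)² = r²Φ(s₁)/(s₁ − s₂)², where Φ(s) = 4ms² − 4ℓs + (ℓ² − 1)/m. -/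
/-! With `d = s₁ - s₂` and `q = ℓ - m (s₁ + s₂)`, the relations give `R₁ R₂ = r² q / d` and
`R₁² + R₂² = r² ((q² - 1) / (m d²) + m)`, so `(R₁ ± R₂)² = r² ((q ± m d)² - 1) / (m d²)`:
the cross term completes the square. Since `q + m d = ℓ - 2 m s₂`, `q - m d = ℓ - 2 m s₁` and
`Φ(s) = ((ℓ - 2 m s)² - 1) / m`, this is the claim. -/

variable {K : Type*} [Field K]

def separationPolynomial (m ℓ s : K) : K :=
  4 * m * s ^ 2 - 4 * ℓ * s + (ℓ ^ 2 - 1) / m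

theorem separationPolynomial_eq_sq_sub_one_div {m : K} (hm : m ≠ 0) (ℓ s : K) :
    separationPolynomial m ℓ s = ((ℓ - 2 * m * s) ^ 2 - 1) / m := by
  unfold separationPolynomial
  field_simp
  ring

theorem mul_sub_eq_of_circle_net {m ℓ r s₁ s₂ x z : K}
    (hx : x = r ^ 2 / (s₁ - s₂)) (hxz : x ^ 2 + z ^ 2 = r ^ 2 * (s₁ + s₂) / (s₁ - s₂)) :
    ℓ * x - m * (x ^ 2 + z ^ 2) = r ^ 2 * (ℓ - m * (s₁ + s₂)) / (s₁ - s₂) := by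
  rw [hxz, hx]
  ring

-- `(r²)⁻¹ * r² * r² = r²` holds also when `r = 0`.
theorem inv_mul_sq_sub_sq_add_eq (m r d q : K) :
    1 / (r ^ 2 * m) * ((r ^ 2 * q / d) ^ 2 - (r ^ 2 / d) ^ 2) + r ^ 2 * m
      = r ^ 2 * ((q ^ 2 - 1) / (m * d ^ 2) + m) := by
  calc _ = (r ^ 2)⁻¹ * r ^ 2 * r ^ 2 * ((q ^ 2 - 1) / (m * d ^ 2)) + r ^ 2 * m := by ring
    _ = _ := by rw [inv_mul_mul_self]; ring

theorem sq_add_sq_sub_eq_separationPolynomial {m ℓ r s₁ s₂ x z R₁ R₂ : K}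
    (hm : m ≠ 0) (hs : s₁ - s₂ ≠ 0)
    (hx : x = r ^ 2 / (s₁ - s₂)) (hxz : x ^ 2 + z ^ 2 = r ^ 2 * (s₁ + s₂) / (s₁ - s₂))
    (hprod : R₁ * R₂ = ℓ * x - m * (x ^ 2 + z ^ 2))
    (hsum : R₁ ^ 2 + R₂ ^ 2 = 1 / (r ^ 2 * m) * ((ℓ * x - m * (x ^ 2 + z ^ 2)) ^ 2 - x ^ 2)
      + r ^ 2 * m) :
    (R₁ + R₂) ^ 2 = r ^ 2 * separationPolynomial m ℓ s₂ / (s₁ - s₂) ^ 2 ∧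
    (R₁ - R₂) ^ 2 = r ^ 2 * separationPolynomial m ℓ s₁ / (s₁ - s₂) ^ 2 := by
  rw [mul_sub_eq_of_circle_net hx hxz] at hprod hsum
  rw [hx, inv_mul_sq_sub_sq_add_eq] at hsum
  rw [separationPolynomial_eq_sq_sub_one_div hm, separationPolynomial_eq_sq_sub_one_div hm]
  constructor
  · rw [add_sq', hsum, mul_assoc, hprod]
    field_simp
    ring
  · rw [sub_sq', hsum, mul_assoc, hprod]
    field_simp
    ring

theorem second_subsystem_separation_identities_general
    (m ℓ r s₁ s₂ : ℝ) (hm : m ≠ 0) (hs : s₁ ≠ s₂)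
    (x z R₁ R₂ : ℂ)
    (hx : x = (r : ℂ) ^ 2 / ((s₁ : ℂ) - (s₂ : ℂ)))
    (hxz : x ^ 2 + z ^ 2 = (r : ℂ) ^ 2 * ((s₁ : ℂ) + (s₂ : ℂ)) / ((s₁ : ℂ) - (s₂ : ℂ)))
    (hprod : R₁ * R₂ = (ℓ : ℂ) * x - (m : ℂ) * (x ^ 2 + z ^ 2))
    (hsum : R₁ ^ 2 + R₂ ^ 2
      = (1 / ((r : ℂ) ^ 2 * (m : ℂ)))
          * (((ℓ : ℂ) * x - (m : ℂ) * (x ^ 2 + z ^ 2)) ^ 2 - x ^ 2)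
        + (r : ℂ) ^ 2 * (m : ℂ)) :
    (R₁ + R₂) ^ 2
        = (r : ℂ) ^ 2 * ((4 * m * s₂ ^ 2 - 4 * ℓ * s₂ + (ℓ ^ 2 - 1) / m : ℝ) : ℂ)
            / (((s₁ - s₂ : ℝ) : ℂ)) ^ 2 ∧
    (R₁ - R₂) ^ 2
        = (r : ℂ) ^ 2 * ((4 * m * s₁ ^ 2 - 4 * ℓ * s₁ + (ℓ ^ 2 - 1) / m : ℝ) : ℂ)
            / (((s₁ - s₂ : ℝ) : ℂ)) ^ 2 := by
  have hmC : (m : ℂ) ≠ 0 := by exact_mod_cast hm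
  have hsC : (s₁ : ℂ) - s₂ ≠ 0 := by exact_mod_cast sub_ne_zero.mpr hs
  push_cast
  exact sq_add_sq_sub_eq_separationPolynomial hmC hsC hx hxz hprod hsum

/-- Separation identities (3.10)–(3.12) for the second critical subsystem: under the
listed relations between `x, z, R₁, R₂` and the circle-net coordinates `s₁, s₂`,
`(R₁ + R₂)² = r²Φ(s₂)/(s₁ − s₂)²` and `(R₁ − R₂)² = r²Φ(s₁)/(s₁ − s₂)²`
with `Φ(s) = 4ms² − 4ℓs + (ℓ² − 1)/m`. -/
theorem second_subsystem_separation_identities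
    (m ℓ r s₁ s₂ : ℝ) (hm : m ≠ 0) (hr : r ≠ 0) (hs : s₁ ≠ s₂)
    (x z R₁ R₂ : ℂ)
    (hx : x = (r : ℂ) ^ 2 / ((s₁ : ℂ) - (s₂ : ℂ)))
    (hxz : x ^ 2 + z ^ 2 = (r : ℂ) ^ 2 * ((s₁ : ℂ) + (s₂ : ℂ)) / ((s₁ : ℂ) - (s₂ : ℂ)))
    (hprod : R₁ * R₂ = (ℓ : ℂ) * x - (m : ℂ) * (x ^ 2 + z ^ 2))
    (hsum : R₁ ^ 2 + R₂ ^ 2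
      = (1 / ((r : ℂ) ^ 2 * (m : ℂ)))
          * (((ℓ : ℂ) * x - (m : ℂ) * (x ^ 2 + z ^ 2)) ^ 2 - x ^ 2)
        + (r : ℂ) ^ 2 * (m : ℂ)) :
    (R₁ + R₂) ^ 2
        = (r : ℂ) ^ 2 * ((4 * m * s₂ ^ 2 - 4 * ℓ * s₂ + (ℓ ^ 2 - 1) / m : ℝ) : ℂ)
            / (((s₁ - s₂ : ℝ) : ℂ)) ^ 2 ∧
    (R₁ - R₂) ^ 2
        = (r : ℂ) ^ 2 * ((4 * m * s₁ ^ 2 - 4 * ℓ * s₁ + (ℓ ^ 2 - 1) / m : ℝ) : ℂ)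
            / (((s₁ - s₂ : ℝ) : ℂ)) ^ 2 :=
  second_subsystem_separation_identities_general m ℓ r s₁ s₂ hm hs x z R₁ R₂ hx hxz hprod hsum
end

section
/- Let a > b > 0, r² = a² − b², and let t ↦ (ω(t), α(t), β(t)) be a differentiable solution of the Kowalevski two-field equations satisfying the geometric constraints |α|² = a², |β|² = b², α·β = 0, and (in the Kowalevski complex variables, assuming x₁(t) ≠ 0 for all t) the invariant relations of the second critical subsystem x₁x₂w₃ − (x₂z₁w₁ + x₁z₂w₂) = 0 and (x₂/x₁)(w₁² + x₁) − (x₁/x₂)(w₂² + x₂) = 0, with integral values M = m ≠ 0 and L = ℓ, where M = (1/(2r²))[(x₂/x₁)(w₁² + x₁) + (x₁/x₂)(w₂² + x₂)] and L = (1/√(x₁x₂))(w₁w₂ + (x₁x₂ + z₁z₂)M). Define x = √(x₁x₂) = |x₁|, z = √(α₃² + β₃²), s₁ = (x² + z² + r²)/(2x), s₂ = (x² + z² − r²)/(2x). Then the separated variables satisfy (ds₁/dt)² = ¼(s₁² − a²)(−Φ(s₁)) and (ds₂/dt)² = ¼(b² − s₂²)Φ(s₂), where Φ(s) = 4ms²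 − 4ℓs + (ℓ² − 1)/m. -/
noncomputable section

/-- `x₁ = (α₁ − β₂) + i(α₂ + β₁)`. -/
def cx1 (a1 a2 b1 b2 : ℝ → ℝ) (t : ℝ) : ℂ :=
  ((a1 t - b2 t : ℝ) : ℂ) + Complex.I * ((a2 t + b1 t : ℝ) : ℂ)

/-- `x₂ = (α₁ − β₂) − i(α₂ + β₁)`. -/
def cx2 (a1 a2 b1 b2 : ℝ → ℝ) (t : ℝ) : ℂ :=
  ((a1 t - b2 t : ℝ) : ℂ) - Complex.I * ((a2 t + b1 t : ℝ) : ℂ)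

/-- `z₁ = α₃ + iβ₃`. -/
def cz1 (a3 b3 : ℝ → ℝ) (t : ℝ) : ℂ := (a3 t : ℂ) + Complex.I * (b3 t : ℂ)

/-- `z₂ = α₃ − iβ₃`. -/
def cz2 (a3 b3 : ℝ → ℝ) (t : ℝ) : ℂ := (a3 t : ℂ) - Complex.I * (b3 t : ℂ)

/-- `w₁ = ω₁ + iω₂`. -/
def cw1 (ω1 ω2 : ℝ → ℝ) (t : ℝ) : ℂ := (ω1 t : ℂ) + Complex.I * (ω2 t : ℂ)

/-- `w₂ = ω₁ − iω₂`. -/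
def cw2 (ω1 ω2 : ℝ → ℝ) (t : ℝ) : ℂ := (ω1 t : ℂ) - Complex.I * (ω2 t : ℂ)

/-- `x = √(x₁x₂) = |x₁|`. -/
def xf (a1 a2 b1 b2 : ℝ → ℝ) (t : ℝ) : ℝ := ‖cx1 a1 a2 b1 b2 t‖

/-- `z = √(α₃² + β₃²)`. -/
def zf (a3 b3 : ℝ → ℝ) (t : ℝ) : ℝ := Real.sqrt (a3 t ^ 2 + b3 t ^ 2)

/-- `s₁ = (x² + z² + r²)/(2x)`. -/
def s1f (r : ℝ) (a1 a2 a3 b1 b2 b3 : ℝ → ℝ) (t : ℝ) : ℝ :=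
  (xf a1 a2 b1 b2 t ^ 2 + zf a3 b3 t ^ 2 + r ^ 2) / (2 * xf a1 a2 b1 b2 t)

/-- `s₂ = (x² + z² − r²)/(2x)`. -/
def s2f (r : ℝ) (a1 a2 a3 b1 b2 b3 : ℝ → ℝ) (t : ℝ) : ℝ :=
  (xf a1 a2 b1 b2 t ^ 2 + zf a3 b3 t ^ 2 - r ^ 2) / (2 * xf a1 a2 b1 b2 t)

/-!
Write `x̄₁w₁ = P + iQ` and `K = ℓx - m(x² + z²)`. The relation defining `𝒩` together with
`M = m` says `(x̄₁w₁)² = x²(mr² - x̄₁)`, and `L = ℓ` says `|x̄₁w₁|² = x²K`. Comparing moduli and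
real parts gives `K² = |mr² - x̄₁|²`, `2Q² = x²(K - mr² + Re x₁)` and `2P² = x²(K + mr² - Re x₁)`,
and these turn into `Φ(s₁) = -(2rQ/x²)²` and `Φ(s₂) = (2rP/x²)²`. Independently, the geometric
constraints give Kowalevski's identity `x₁ȳ₁ = r² - z₁²` (with `y₁ = (α₁+β₂) + i(α₂-β₁)`), from
which `s₁² - a² = (rα₃/x)²`, `b² - s₂² = (rβ₃/x)²`, `ṡ₁ = r²α₃Q/x³` and `ṡ₂ = -r²β₃P/x³`.
Multiplying out gives both separated equations.
-/

open ComplexConjugate Complex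

-- Real and imaginary parts of Kowalevski's identity `x₁ȳ₁ = r² - z₁²`.
lemma x_mul_conj_y_re_im {A1 A2 A3 B1 B2 B3 a b r : ℝ}
    (hα : A1 ^ 2 + A2 ^ 2 + A3 ^ 2 = a ^ 2) (hβ : B1 ^ 2 + B2 ^ 2 + B3 ^ 2 = b ^ 2)
    (hαβ : A1 * B1 + A2 * B2 + A3 * B3 = 0) (hr : r ^ 2 = a ^ 2 - b ^ 2) :
    (A1 - B2) * (A1 + B2) + (A2 + B1) * (A2 - B1) = r ^ 2 - A3 ^ 2 + B3 ^ 2 ∧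
      (A1 - B2) * (A2 - B1) - (A2 + B1) * (A1 + B2) = 2 * A3 * B3 :=
  ⟨by linear_combination hα - hβ - hr, by linear_combination -2 * hαβ⟩

-- `|x₁|²|y₁|² = |r² - z₁²|²`, with `|y₁|²` eliminated through the constraints.
lemma norm_x_mul_y_identity {A1 A2 A3 B1 B2 B3 a b r x z : ℝ}
    (hα : A1 ^ 2 + A2 ^ 2 + A3 ^ 2 = a ^ 2) (hβ : B1 ^ 2 + B2 ^ 2 + B3 ^ 2 = b ^ 2)
    (hαβ : A1 * B1 + A2 * B2 + A3 * B3 = 0) (hr : r ^ 2 = a ^ 2 - b ^ 2)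
    (hx : x ^ 2 = (A1 - B2) ^ 2 + (A2 + B1) ^ 2) (hz : z ^ 2 = A3 ^ 2 + B3 ^ 2) :
    (x ^ 2 + z ^ 2 + r ^ 2) ^ 2 - 4 * a ^ 2 * x ^ 2 = 4 * r ^ 2 * A3 ^ 2 := by
  obtain ⟨hre, him⟩ := x_mul_conj_y_re_im hα hβ hαβ hr
  have hy : (A1 + B2) ^ 2 + (A2 - B1) ^ 2 = 2 * (a ^ 2 + b ^ 2) - 2 * z ^ 2 - x ^ 2 := by
    linear_combination 2 * hα + 2 * hβ + hx + 2 * hz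
  have hnorm : x ^ 2 * ((A1 + B2) ^ 2 + (A2 - B1) ^ 2)
      = (r ^ 2 - A3 ^ 2 + B3 ^ 2) ^ 2 + (2 * A3 * B3) ^ 2 := by
    rw [hx, ← hre, ← him]; ring
  rw [hy] at hnorm
  linear_combination -hnorm + 2 * x ^ 2 * hr + (z ^ 2 + A3 ^ 2 + B3 ^ 2 + 2 * r ^ 2) * hz

lemma s₁_sq_sub_sq {A1 A2 A3 B1 B2 B3 a b r x z : ℝ}
    (hα : A1 ^ 2 + A2 ^ 2 + A3 ^ 2 = a ^ 2) (hβ : B1 ^ 2 + B2 ^ 2 + B3 ^ 2 = b ^ 2)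
    (hαβ : A1 * B1 + A2 * B2 + A3 * B3 = 0) (hr : r ^ 2 = a ^ 2 - b ^ 2) (hx0 : x ≠ 0)
    (hx : x ^ 2 = (A1 - B2) ^ 2 + (A2 + B1) ^ 2) (hz : z ^ 2 = A3 ^ 2 + B3 ^ 2) :
    ((x ^ 2 + z ^ 2 + r ^ 2) / (2 * x)) ^ 2 - a ^ 2 = (r * A3 / x) ^ 2 := by
  have := norm_x_mul_y_identity hα hβ hαβ hr hx hz
  field_simp
  linear_combination this

lemma sq_sub_s₂_sq {A1 A2 A3 B1 B2 B3 a b r x z : ℝ}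
    (hα : A1 ^ 2 + A2 ^ 2 + A3 ^ 2 = a ^ 2) (hβ : B1 ^ 2 + B2 ^ 2 + B3 ^ 2 = b ^ 2)
    (hαβ : A1 * B1 + A2 * B2 + A3 * B3 = 0) (hr : r ^ 2 = a ^ 2 - b ^ 2) (hx0 : x ≠ 0)
    (hx : x ^ 2 = (A1 - B2) ^ 2 + (A2 + B1) ^ 2) (hz : z ^ 2 = A3 ^ 2 + B3 ^ 2) :
    b ^ 2 - ((x ^ 2 + z ^ 2 - r ^ 2) / (2 * x)) ^ 2 = (r * B3 / x) ^ 2 := by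
  have := norm_x_mul_y_identity hα hβ hαβ hr hx hz
  field_simp
  linear_combination -this + 4 * x ^ 2 * hr + 4 * r ^ 2 * hz

lemma deriv_s₁_numerator {A1 A2 A3 B1 B2 B3 W1 W2 a b r x z X' Z' : ℝ}
    (hα : A1 ^ 2 + A2 ^ 2 + A3 ^ 2 = a ^ 2) (hβ : B1 ^ 2 + B2 ^ 2 + B3 ^ 2 = b ^ 2)
    (hαβ : A1 * B1 + A2 * B2 + A3 * B3 = 0) (hr : r ^ 2 = a ^ 2 - b ^ 2)
    (hx : x ^ 2 = (A1 - B2) ^ 2 + (A2 + B1) ^ 2) (hz : z ^ 2 = A3 ^ 2 + B3 ^ 2)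
    (hX' : X' = -2 * (A3 * ((A1 - B2) * W2 - (A2 + B1) * W1)
      + B3 * ((A1 - B2) * W1 + (A2 + B1) * W2)))
    (hZ' : Z' = 2 * (A3 * (A1 * W2 - A2 * W1) + B3 * (B1 * W2 - B2 * W1))) :
    2 * x ^ 2 * (X' + Z') - (x ^ 2 + z ^ 2 + r ^ 2) * X'
      = 4 * r ^ 2 * A3 * ((A1 - B2) * W2 - (A2 + B1) * W1) := by
  obtain ⟨hre, him⟩ := x_mul_conj_y_re_im hα hβ hαβ hr
  subst hX' hZ'
  linear_combination
    (2 * A3 * ((A1 - B2) * W2 - (A2 + B1) * W1) - 2 * B3 * ((A1 - B2) * W1 + (A2 + B1) * W2)) * hre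
    - (2 * A3 * ((A1 - B2) * W1 + (A2 + B1) * W2)
      + 2 * B3 * ((A1 - B2) * W2 - (A2 + B1) * W1)) * him
    + (-2 * (A3 * ((A1 - B2) * W2 - (A2 + B1) * W1) + B3 * ((A1 - B2) * W1 + (A2 + B1) * W2))
      + 4 * (A3 * (A1 * W2 - A2 * W1) + B3 * (B1 * W2 - B2 * W1))) * hx
    + 2 * (A3 * ((A1 - B2) * W2 - (A2 + B1) * W1) + B3 * ((A1 - B2) * W1 + (A2 + B1) * W2)) * hz

lemma deriv_s₂_numerator {A1 A2 A3 B1 B2 B3 W1 W2 a b r x z X' Z' : ℝ}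
    (hα : A1 ^ 2 + A2 ^ 2 + A3 ^ 2 = a ^ 2) (hβ : B1 ^ 2 + B2 ^ 2 + B3 ^ 2 = b ^ 2)
    (hαβ : A1 * B1 + A2 * B2 + A3 * B3 = 0) (hr : r ^ 2 = a ^ 2 - b ^ 2)
    (hx : x ^ 2 = (A1 - B2) ^ 2 + (A2 + B1) ^ 2) (hz : z ^ 2 = A3 ^ 2 + B3 ^ 2)
    (hX' : X' = -2 * (A3 * ((A1 - B2) * W2 - (A2 + B1) * W1)
      + B3 * ((A1 - B2) * W1 + (A2 + B1) * W2)))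
    (hZ' : Z' = 2 * (A3 * (A1 * W2 - A2 * W1) + B3 * (B1 * W2 - B2 * W1))) :
    2 * x ^ 2 * (X' + Z') - (x ^ 2 + z ^ 2 - r ^ 2) * X'
      = -(4 * r ^ 2 * B3 * ((A1 - B2) * W1 + (A2 + B1) * W2)) := by
  linear_combination deriv_s₁_numerator hα hβ hαβ hr hx hz hX' hZ' + 2 * r ^ 2 * hX'

lemma quadratic_div_two_mul {m ℓ S x : ℝ} (hm : m ≠ 0) (hx : x ≠ 0) :
    4 * m * (S / (2 * x)) ^ 2 - 4 * ℓ * (S / (2 * x)) + (ℓ ^ 2 - 1) / m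
      = ((m * S - ℓ * x) ^ 2 - x ^ 2) / (m * x ^ 2) := by
  field_simp
  ring

lemma neg_quadratic_s₁ {m ℓ r x z X1 Y1 K Q : ℝ} (hm : m ≠ 0) (hx0 : x ≠ 0)
    (hx : x ^ 2 = X1 ^ 2 + Y1 ^ 2) (hK : K = ℓ * x - m * (x ^ 2 + z ^ 2))
    (hK2 : K ^ 2 = (m * r ^ 2 - X1) ^ 2 + Y1 ^ 2)
    (hQ : 2 * Q ^ 2 = x ^ 2 * (K - (m * r ^ 2 - X1))) :
    -(4 * m * ((x ^ 2 + z ^ 2 + r ^ 2) / (2 * x)) ^ 2 - 4 * ℓ * ((x ^ 2 + z ^ 2 + r ^ 2) / (2 * x))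
      + (ℓ ^ 2 - 1) / m) = (2 * r * Q / x ^ 2) ^ 2 := by
  rw [quadratic_div_two_mul hm hx0]
  have hmS : m * (x ^ 2 + z ^ 2 + r ^ 2) - ℓ * x = m * r ^ 2 - K := by rw [hK]; ring
  rw [hmS]
  field_simp
  linear_combination (-(x ^ 2)) * hK2 - 2 * m * r ^ 2 * hQ + x ^ 2 * hx

lemma quadratic_s₂ {m ℓ r x z X1 Y1 K P : ℝ} (hm : m ≠ 0) (hx0 : x ≠ 0)
    (hx : x ^ 2 = X1 ^ 2 + Y1 ^ 2) (hK : K = ℓ * x - m * (x ^ 2 + z ^ 2))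
    (hK2 : K ^ 2 = (m * r ^ 2 - X1) ^ 2 + Y1 ^ 2)
    (hP : 2 * P ^ 2 = x ^ 2 * (K + (m * r ^ 2 - X1))) :
    4 * m * ((x ^ 2 + z ^ 2 - r ^ 2) / (2 * x)) ^ 2 - 4 * ℓ * ((x ^ 2 + z ^ 2 - r ^ 2) / (2 * x))
      + (ℓ ^ 2 - 1) / m = (2 * r * P / x ^ 2) ^ 2 := by
  rw [quadratic_div_two_mul hm hx0]
  have hmS : m * (x ^ 2 + z ^ 2 - r ^ 2) - ℓ * x = -(m * r ^ 2 + K) := by rw [hK]; ring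
  rw [hmS]
  field_simp
  linear_combination x ^ 2 * hK2 - 2 * m * r ^ 2 * hP - x ^ 2 * hx

lemma conj_mul_sq_eq {x w : ℂ} {m r : ℝ} (hx : x ≠ 0) (hr : r ≠ 0)
    (hdiff : conj x / x * (w ^ 2 + x) - x / conj x * (conj w ^ 2 + conj x) = 0)
    (hsum : 1 / (2 * (r : ℂ) ^ 2) * (conj x / x * (w ^ 2 + x) + x / conj x * (conj w ^ 2 + conj x))
      = m) :
    (conj x * w) ^ 2 = normSq x * (m * r ^ 2 - conj x) := by
  have hx' : conj x ≠ 0 := (map_ne_zero _).2 hx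
  have hr' : (r : ℂ) ≠ 0 := ofReal_ne_zero.2 hr
  rw [one_div_mul_eq_div, div_eq_iff (by simp [hr'])] at hsum
  have h : conj x / x * (w ^ 2 + x) = m * r ^ 2 := by
    linear_combination hdiff / 2 + hsum / 2
  rw [← mul_conj]
  field_simp at h
  linear_combination conj x * h

lemma normSq_conj_mul_eq {x w z : ℂ} {m ℓ : ℝ} (hx : x ≠ 0)
    (hL : 1 / (‖x‖ : ℂ) * (w * conj w + (x * conj x + z * conj z) * m) = ℓ) :
    normSq (conj x * w) = normSq x * (ℓ * ‖x‖ - m * (normSq x + normSq z)) := by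
  have hx' : (‖x‖ : ℂ) ≠ 0 := ofReal_ne_zero.2 (norm_ne_zero_iff.2 hx)
  simp only [mul_conj] at hL
  field_simp at hL
  have hL' : normSq w + (normSq x + normSq z) * m = ‖x‖ * ℓ := by exact_mod_cast hL
  rw [normSq_mul, normSq_conj]
  linear_combination normSq x * hL'

lemma sq_re_im_of_sq_eq_mul {u v : ℂ} {X K : ℝ} (hX : X ≠ 0) (hsq : u ^ 2 = X * v)
    (hnorm : normSq u = X * K) :
    K ^ 2 = normSq v ∧ 2 * u.im ^ 2 = X * (K - v.re) ∧ 2 * u.re ^ 2 = X * (K + v.re) := by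
  have hre : u.re ^ 2 - u.im ^ 2 = X * v.re := by
    simpa [sq] using congrArg re hsq
  have hnorm' : u.re ^ 2 + u.im ^ 2 = X * K := by rw [← hnorm, normSq_apply]; ring
  refine ⟨?_, by linear_combination hnorm' - hre, by linear_combination hnorm' + hre⟩
  have h := congrArg normSq hsq
  rw [map_pow, hnorm, map_mul, normSq_ofReal] at h
  exact mul_left_cancel₀ (mul_ne_zero hX hX) (by linear_combination h)

lemma hasDerivAt_add_add_div_two_sqrt {f g : ℝ → ℝ} {f' g' t : ℝ} (c : ℝ)
    (hf : HasDerivAt f f' t) (hg : HasDerivAt g g' t) (hpos : 0 < f t) :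
    HasDerivAt (fun s => (f s + g s + c) / (2 * √(f s)))
      ((2 * f t * (f' + g') - (f t + g t + c) * f') / (4 * f t * √(f t))) t := by
  have hsqrt : √(f t) ≠ 0 := (Real.sqrt_pos.2 hpos).ne'
  refine (((hf.add hg).add_const c).div ((hf.sqrt hpos.ne').const_mul 2)
    (mul_ne_zero two_ne_zero hsqrt)).congr_deriv ?_
  simp only [Pi.add_apply]
  field_simp
  rw [Real.sq_sqrt hpos.le]
  ring

lemma second_subsystem_relations {x w z : ℂ} {m ℓ r K : ℝ} (hx : x ≠ 0) (hr : r ≠ 0)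
    (hdiff : conj x / x * (w ^ 2 + x) - x / conj x * (conj w ^ 2 + conj x) = 0)
    (hsum : 1 / (2 * (r : ℂ) ^ 2) * (conj x / x * (w ^ 2 + x) + x / conj x * (conj w ^ 2 + conj x))
      = m)
    (hL : 1 / (‖x‖ : ℂ) * (w * conj w + (x * conj x + z * conj z) * m) = ℓ)
    (hK : K = ℓ * ‖x‖ - m * (‖x‖ ^ 2 + ‖z‖ ^ 2)) :
    K ^ 2 = (m * r ^ 2 - x.re) ^ 2 + x.im ^ 2 ∧
      2 * (conj x * w).im ^ 2 = ‖x‖ ^ 2 * (K - (m * r ^ 2 - x.re)) ∧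
      2 * (conj x * w).re ^ 2 = ‖x‖ ^ 2 * (K + (m * r ^ 2 - x.re)) := by
  have hnorm := normSq_conj_mul_eq hx hL
  rw [← Complex.sq_norm x, ← Complex.sq_norm z, ← hK] at hnorm
  have hsq := conj_mul_sq_eq hx hr hdiff hsum
  rw [← Complex.sq_norm] at hsq
  obtain ⟨hK2, hQ, hP⟩ := sq_re_im_of_sq_eq_mul (X := ‖x‖ ^ 2) (v := ((m * r ^ 2 : ℝ) : ℂ) - conj x)
    (by positivity) (by exact_mod_cast hsq) hnorm
  have hv_re : (((m * r ^ 2 : ℝ) : ℂ) - conj x).re = m * r ^ 2 - x.re := by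
    simp only [sub_re, ofReal_re, conj_re]
  have hv : normSq (((m * r ^ 2 : ℝ) : ℂ) - conj x) = (m * r ^ 2 - x.re) ^ 2 + x.im ^ 2 := by
    simp only [normSq_apply, sub_re, sub_im, ofReal_re, ofReal_im, conj_re, conj_im]; ring
  rw [hv] at hK2
  rw [hv_re] at hQ hP
  exact ⟨hK2, hQ, hP⟩

section Trajectory

variable {ω1 ω2 a1 a2 a3 b1 b2 b3 : ℝ → ℝ}

lemma cx2_eq_conj (t : ℝ) : cx2 a1 a2 b1 b2 t = conj (cx1 a1 a2 b1 b2 t) := by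
  rw [cx1, cx2, map_add, map_mul, conj_I, conj_ofReal, conj_ofReal]; ring

lemma cz2_eq_conj (t : ℝ) : cz2 a3 b3 t = conj (cz1 a3 b3 t) := by
  rw [cz1, cz2, map_add, map_mul, conj_I, conj_ofReal, conj_ofReal]; ring

lemma cw2_eq_conj (t : ℝ) : cw2 ω1 ω2 t = conj (cw1 ω1 ω2 t) := by
  rw [cw1, cw2, map_add, map_mul, conj_I, conj_ofReal, conj_ofReal]; ring

lemma xf_sq (a1 a2 b1 b2 : ℝ → ℝ) (t : ℝ) :
    xf a1 a2 b1 b2 t ^ 2 = (a1 t - b2 t) ^ 2 + (a2 t + b1 t) ^ 2 := by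
  rw [xf, Complex.sq_norm, cx1, mul_comm I, normSq_add_mul_I]

lemma xf_eq_sqrt (a1 a2 b1 b2 : ℝ → ℝ) (t : ℝ) :
    xf a1 a2 b1 b2 t = √((a1 t - b2 t) ^ 2 + (a2 t + b1 t) ^ 2) := by
  rw [← xf_sq]
  exact (Real.sqrt_sq (norm_nonneg _)).symm

lemma zf_sq (a3 b3 : ℝ → ℝ) (t : ℝ) : zf a3 b3 t ^ 2 = a3 t ^ 2 + b3 t ^ 2 :=
  Real.sq_sqrt (by positivity)

lemma norm_cz1 (t : ℝ) : ‖cz1 a3 b3 t‖ = zf a3 b3 t := by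
  rw [zf, Complex.norm_def, cz1, mul_comm I, normSq_add_mul_I]

lemma hasDerivAt_normSq_cx1 {ω3 : ℝ → ℝ} (hsol : KowSol ω1 ω2 ω3 a1 a2 a3 b1 b2 b3) (t : ℝ) :
    HasDerivAt (fun s => (a1 s - b2 s) ^ 2 + (a2 s + b1 s) ^ 2)
      (-2 * (a3 t * ((a1 t - b2 t) * ω2 t - (a2 t + b1 t) * ω1 t)
        + b3 t * ((a1 t - b2 t) * ω1 t + (a2 t + b1 t) * ω2 t))) t := by
  obtain ⟨-, -, -, ha1, ha2, -, hb1, hb2, -⟩ := hsol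
  refine ((((ha1 t).sub (hb2 t)).pow 2).add (((ha2 t).add (hb1 t)).pow 2)).congr_deriv ?_
  simp only [Pi.sub_apply, Pi.add_apply, Nat.cast_ofNat]
  ring

lemma hasDerivAt_normSq_cz1 {ω3 : ℝ → ℝ} (hsol : KowSol ω1 ω2 ω3 a1 a2 a3 b1 b2 b3) (t : ℝ) :
    HasDerivAt (fun s => a3 s ^ 2 + b3 s ^ 2)
      (2 * (a3 t * (a1 t * ω2 t - a2 t * ω1 t) + b3 t * (b1 t * ω2 t - b2 t * ω1 t))) t := by
  obtain ⟨-, -, -, -, -, ha3, -, -, hb3⟩ := hsol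
  refine (((ha3 t).pow 2).add ((hb3 t).pow 2)).congr_deriv ?_
  simp only [Nat.cast_ofNat]
  ring

lemma hasDerivAt_xf_sq_add_zf_sq_add_div {ω3 : ℝ → ℝ}
    (hsol : KowSol ω1 ω2 ω3 a1 a2 a3 b1 b2 b3) {t : ℝ}
    (hx0 : cx1 a1 a2 b1 b2 t ≠ 0) (c : ℝ) :
    HasDerivAt (fun s => (xf a1 a2 b1 b2 s ^ 2 + zf a3 b3 s ^ 2 + c) / (2 * xf a1 a2 b1 b2 s))
      ((2 * xf a1 a2 b1 b2 t ^ 2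
          * (-2 * (a3 t * ((a1 t - b2 t) * ω2 t - (a2 t + b1 t) * ω1 t)
              + b3 t * ((a1 t - b2 t) * ω1 t + (a2 t + b1 t) * ω2 t))
            + 2 * (a3 t * (a1 t * ω2 t - a2 t * ω1 t) + b3 t * (b1 t * ω2 t - b2 t * ω1 t)))
        - (xf a1 a2 b1 b2 t ^ 2 + zf a3 b3 t ^ 2 + c)
          * (-2 * (a3 t * ((a1 t - b2 t) * ω2 t - (a2 t + b1 t) * ω1 t)
              + b3 t * ((a1 t - b2 t) * ω1 t + (a2 t + b1 t) * ω2 t))))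
        / (4 * xf a1 a2 b1 b2 t ^ 3)) t := by
  have hpos : 0 < (a1 t - b2 t) ^ 2 + (a2 t + b1 t) ^ 2 := by
    rw [← xf_sq]; exact pow_pos (norm_pos_iff.2 hx0) 2
  have h := hasDerivAt_add_add_div_two_sqrt c (hasDerivAt_normSq_cx1 hsol t)
    (hasDerivAt_normSq_cz1 hsol t) hpos
  simp only [← xf_eq_sqrt a1 a2 b1 b2] at h
  simp only [← xf_sq a1 a2 b1 b2, ← zf_sq a3 b3] at h
  convert h using 1
  ring

lemma hasDerivAt_s1f {ω3 : ℝ → ℝ} {a b r : ℝ} (hsol : KowSol ω1 ω2 ω3 a1 a2 a3 b1 b2 b3) {t : ℝ}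
    (hα : a1 t ^ 2 + a2 t ^ 2 + a3 t ^ 2 = a ^ 2) (hβ : b1 t ^ 2 + b2 t ^ 2 + b3 t ^ 2 = b ^ 2)
    (hαβ : a1 t * b1 t + a2 t * b2 t + a3 t * b3 t = 0) (hr : r ^ 2 = a ^ 2 - b ^ 2)
    (hx0 : cx1 a1 a2 b1 b2 t ≠ 0) :
    HasDerivAt (s1f r a1 a2 a3 b1 b2 b3)
      (r ^ 2 * a3 t * (conj (cx1 a1 a2 b1 b2 t) * cw1 ω1 ω2 t).im / xf a1 a2 b1 b2 t ^ 3) t := by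
  refine (hasDerivAt_xf_sq_add_zf_sq_add_div hsol hx0 (r ^ 2)).congr_deriv ?_
  rw [deriv_s₁_numerator hα hβ hαβ hr (xf_sq a1 a2 b1 b2 t) (zf_sq a3 b3 t) rfl rfl]
  simp only [cx1, cw1, mul_im, conj_re, conj_im, add_re, add_im, ofReal_re, ofReal_im, mul_re,
    I_re, I_im]
  ring

lemma hasDerivAt_s2f {ω3 : ℝ → ℝ} {a b r : ℝ} (hsol : KowSol ω1 ω2 ω3 a1 a2 a3 b1 b2 b3) {t : ℝ}
    (hα : a1 t ^ 2 + a2 t ^ 2 + a3 t ^ 2 = a ^ 2) (hβ : b1 t ^ 2 + b2 t ^ 2 + b3 t ^ 2 = b ^ 2)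
    (hαβ : a1 t * b1 t + a2 t * b2 t + a3 t * b3 t = 0) (hr : r ^ 2 = a ^ 2 - b ^ 2)
    (hx0 : cx1 a1 a2 b1 b2 t ≠ 0) :
    HasDerivAt (s2f r a1 a2 a3 b1 b2 b3)
      (-(r ^ 2 * b3 t * (conj (cx1 a1 a2 b1 b2 t) * cw1 ω1 ω2 t).re) / xf a1 a2 b1 b2 t ^ 3) t := by
  have hs : s2f r a1 a2 a3 b1 b2 b3
      = fun s => (xf a1 a2 b1 b2 s ^ 2 + zf a3 b3 s ^ 2 + -r ^ 2) / (2 * xf a1 a2 b1 b2 s) := by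
    funext s; rw [s2f, sub_eq_add_neg]
  rw [hs]
  refine (hasDerivAt_xf_sq_add_zf_sq_add_div hsol hx0 (-r ^ 2)).congr_deriv ?_
  rw [← sub_eq_add_neg,
    deriv_s₂_numerator hα hβ hαβ hr (xf_sq a1 a2 b1 b2 t) (zf_sq a3 b3 t) rfl rfl]
  simp only [cx1, cw1, mul_re, conj_re, conj_im, add_re, add_im, ofReal_re, ofReal_im, mul_im,
    I_re, I_im]
  ring

end Trajectory

theorem second_subsystem_separated_equations_general
    (a b r m ℓ : ℝ)
    (hr : r ^ 2 = a ^ 2 - b ^ 2) (hm : m ≠ 0)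
    (ω1 ω2 ω3 a1 a2 a3 b1 b2 b3 : ℝ → ℝ)
    (hsol : KowSol ω1 ω2 ω3 a1 a2 a3 b1 b2 b3)
    (hga : ∀ t, a1 t ^ 2 + a2 t ^ 2 + a3 t ^ 2 = a ^ 2)
    (hgb : ∀ t, b1 t ^ 2 + b2 t ^ 2 + b3 t ^ 2 = b ^ 2)
    (hgab : ∀ t, a1 t * b1 t + a2 t * b2 t + a3 t * b3 t = 0)
    (hx0 : ∀ t, cx1 a1 a2 b1 b2 t ≠ 0)
    (hrel2 : ∀ t,
      (cx2 a1 a2 b1 b2 t / cx1 a1 a2 b1 b2 t) * (cw1 ω1 ω2 t ^ 2 + cx1 a1 a2 b1 b2 t)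
        - (cx1 a1 a2 b1 b2 t / cx2 a1 a2 b1 b2 t) * (cw2 ω1 ω2 t ^ 2 + cx2 a1 a2 b1 b2 t)
        = 0)
    (hM : ∀ t,
      (1 / (2 * (r : ℂ) ^ 2))
        * ((cx2 a1 a2 b1 b2 t / cx1 a1 a2 b1 b2 t) * (cw1 ω1 ω2 t ^ 2 + cx1 a1 a2 b1 b2 t)
          + (cx1 a1 a2 b1 b2 t / cx2 a1 a2 b1 b2 t) * (cw2 ω1 ω2 t ^ 2 + cx2 a1 a2 b1 b2 t))
        = (m : ℂ))
    (hL : ∀ t,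
      (1 / (xf a1 a2 b1 b2 t : ℂ))
        * (cw1 ω1 ω2 t * cw2 ω1 ω2 t
          + (cx1 a1 a2 b1 b2 t * cx2 a1 a2 b1 b2 t + cz1 a3 b3 t * cz2 a3 b3 t) * (m : ℂ))
        = (ℓ : ℂ)) :
    ∀ t,
      (deriv (s1f r a1 a2 a3 b1 b2 b3) t) ^ 2
        = (1 / 4) * ((s1f r a1 a2 a3 b1 b2 b3 t) ^ 2 - a ^ 2)
          * (-(4 * m * (s1f r a1 a2 a3 b1 b2 b3 t) ^ 2
              - 4 * ℓ * (s1f r a1 a2 a3 b1 b2 b3 t) + (ℓ ^ 2 - 1) / m)) ∧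
      (deriv (s2f r a1 a2 a3 b1 b2 b3) t) ^ 2
        = (1 / 4) * (b ^ 2 - (s2f r a1 a2 a3 b1 b2 b3 t) ^ 2)
          * (4 * m * (s2f r a1 a2 a3 b1 b2 b3 t) ^ 2
              - 4 * ℓ * (s2f r a1 a2 a3 b1 b2 b3 t) + (ℓ ^ 2 - 1) / m) := by
  -- at `r = 0` the factor `1 / (2r²)` in `hM` is `0`, which would force `m = 0`
  have hr0 : r ≠ 0 := by
    rintro rfl
    exact hm (by simpa using (hM 0).symm)
  simp only [cx2_eq_conj, cz2_eq_conj, cw2_eq_conj, xf] at hrel2 hM hL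
  intro t
  have hx : xf a1 a2 b1 b2 t ≠ 0 := norm_ne_zero_iff.2 (hx0 t)
  have hx_re_im :
      xf a1 a2 b1 b2 t ^ 2 = (cx1 a1 a2 b1 b2 t).re ^ 2 + (cx1 a1 a2 b1 b2 t).im ^ 2 := by
    rw [xf, Complex.sq_norm, normSq_apply]; ring
  obtain ⟨hK2, hQ, hP⟩ := second_subsystem_relations (hx0 t) hr0 (hrel2 t) (hM t) (hL t)
    (K := ℓ * xf a1 a2 b1 b2 t - m * (xf a1 a2 b1 b2 t ^ 2 + zf a3 b3 t ^ 2))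
    (by rw [norm_cz1]; rfl)
  rw [(hasDerivAt_s1f hsol (hga t) (hgb t) (hgab t) hr (hx0 t)).deriv,
    (hasDerivAt_s2f hsol (hga t) (hgb t) (hgab t) hr (hx0 t)).deriv]
  simp only [s1f, s2f]
  rw [s₁_sq_sub_sq (hga t) (hgb t) (hgab t) hr hx (xf_sq a1 a2 b1 b2 t) (zf_sq a3 b3 t),
    sq_sub_s₂_sq (hga t) (hgb t) (hgab t) hr hx (xf_sq a1 a2 b1 b2 t) (zf_sq a3 b3 t),
    neg_quadratic_s₁ hm hx hx_re_im rfl hK2 hQ, quadratic_s₂ hm hx hx_re_im rfl hK2 hP]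
  constructor <;> ring

/-- On the second critical subsystem (invariant relations below) with integral values
`M = m`, `L = ℓ`, the circle-net variables `s₁, s₂` satisfy the separated equations
`(ds₁/dt)² = ¼(s₁² − a²)(−Φ(s₁))` and `(ds₂/dt)² = ¼(b² − s₂²)Φ(s₂)`,
where `Φ(s) = 4ms² − 4ℓs + (ℓ² − 1)/m`. -/
theorem second_subsystem_separated_equations
    (a b r m ℓ : ℝ) (hb : 0 < b) (hab : b < a)
    (hr : r ^ 2 = a ^ 2 - b ^ 2) (hm : m ≠ 0)
    (ω1 ω2 ω3 a1 a2 a3 b1 b2 b3 : ℝ → ℝ)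
    (hsol : KowSol ω1 ω2 ω3 a1 a2 a3 b1 b2 b3)
    (hga : ∀ t, a1 t ^ 2 + a2 t ^ 2 + a3 t ^ 2 = a ^ 2)
    (hgb : ∀ t, b1 t ^ 2 + b2 t ^ 2 + b3 t ^ 2 = b ^ 2)
    (hgab : ∀ t, a1 t * b1 t + a2 t * b2 t + a3 t * b3 t = 0)
    (hx0 : ∀ t, cx1 a1 a2 b1 b2 t ≠ 0)
    (hrel1 : ∀ t,
      cx1 a1 a2 b1 b2 t * cx2 a1 a2 b1 b2 t * (ω3 t : ℂ)
        - (cx2 a1 a2 b1 b2 t * cz1 a3 b3 t * cw1 ω1 ω2 t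
            + cx1 a1 a2 b1 b2 t * cz2 a3 b3 t * cw2 ω1 ω2 t) = 0)
    (hrel2 : ∀ t,
      (cx2 a1 a2 b1 b2 t / cx1 a1 a2 b1 b2 t) * (cw1 ω1 ω2 t ^ 2 + cx1 a1 a2 b1 b2 t)
        - (cx1 a1 a2 b1 b2 t / cx2 a1 a2 b1 b2 t) * (cw2 ω1 ω2 t ^ 2 + cx2 a1 a2 b1 b2 t)
        = 0)
    (hM : ∀ t,
      (1 / (2 * (r : ℂ) ^ 2))
        * ((cx2 a1 a2 b1 b2 t / cx1 a1 a2 b1 b2 t) * (cw1 ω1 ω2 t ^ 2 + cx1 a1 a2 b1 b2 t)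
          + (cx1 a1 a2 b1 b2 t / cx2 a1 a2 b1 b2 t) * (cw2 ω1 ω2 t ^ 2 + cx2 a1 a2 b1 b2 t))
        = (m : ℂ))
    (hL : ∀ t,
      (1 / (xf a1 a2 b1 b2 t : ℂ))
        * (cw1 ω1 ω2 t * cw2 ω1 ω2 t
          + (cx1 a1 a2 b1 b2 t * cx2 a1 a2 b1 b2 t + cz1 a3 b3 t * cz2 a3 b3 t) * (m : ℂ))
        = (ℓ : ℂ)) :
    ∀ t,
      (deriv (s1f r a1 a2 a3 b1 b2 b3) t) ^ 2
        = (1 / 4) * ((s1f r a1 a2 a3 b1 b2 b3 t) ^ 2 - a ^ 2)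
          * (-(4 * m * (s1f r a1 a2 a3 b1 b2 b3 t) ^ 2
              - 4 * ℓ * (s1f r a1 a2 a3 b1 b2 b3 t) + (ℓ ^ 2 - 1) / m)) ∧
      (deriv (s2f r a1 a2 a3 b1 b2 b3) t) ^ 2
        = (1 / 4) * (b ^ 2 - (s2f r a1 a2 a3 b1 b2 b3 t) ^ 2)
          * (4 * m * (s2f r a1 a2 a3 b1 b2 b3 t) ^ 2
              - 4 * ℓ * (s2f r a1 a2 a3 b1 b2 b3 t) + (ℓ ^ 2 - 1) / m) :=
  second_subsystem_separated_equations_general a b r m ℓ hr hm ω1 ω2 ω3 a1 a2 a3 b1 b2 b3 hsol hga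
    hgb hgab hx0 hrel2 hM hL
end
end
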